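/- arXiv:2210.16790 — 10 statements merged into one kernel-verified Lean document; each statement's English description precedes it below -/
import Mathlib

section
/- Let W ∈ ℝ^{n×n} be doubly stochastic and let λ₂ ∈ [0,1) be such that for every integer m ≥ 1 the operator norm of W^m − (1/n)·𝟙𝟙ᵀ is at most λ₂^m (for a symmetric doubly stochastic W one may take λ₂ to be the second largest absolute value of an eigenvalue of W). Let u^i_k ∈ ℝ^d for i ∈ {1,…,n}, k ∈ {1,…,K}, satisfy ‖u^i_k‖ ≤ G for all i, k. Define g^i_1 = u^i_1, d^i_k = Σ_{j=1}^n W_{ij} g^j_k, and g^i_{k+1} = u^i_{k+1} − u^i_k + d^i_k. Then for every i ∈ {1,…,n} and k ∈ {1,…,K}: ‖d^i_k‖ ≤ 2nG(λ₂/(1−λ₂) + 1). -/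
open Finset

noncomputable section StmtAux

variable {n d : ℕ}

/-- identity map into the `PiLp 2` structure -/
private def P (x : Fin n → EuclideanSpace ℝ (Fin d)) :
    PiLp 2 (fun _ : Fin n => EuclideanSpace ℝ (Fin d)) := WithLp.toLp 2 x

private lemma P_apply (x : Fin n → EuclideanSpace ℝ (Fin d)) (i : Fin n) : P x i = x i := rfl

private lemma P_sum {ι : Type*} (s : Finset ι) (f : ι → (Fin n → EuclideanSpace ℝ (Fin d))) :
    P (∑ a ∈ s, f a) = ∑ a ∈ s, P (f a) := by
  classical
  induction s using Finset.induction with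
  | empty => simp [P]
  | insert _ _ h ih => rw [Finset.sum_insert h, Finset.sum_insert h, ← ih]; exact WithLp.toLp_add 2 _ _

private lemma P_add (x y : Fin n → EuclideanSpace ℝ (Fin d)) : P (x + y) = P x + P y := WithLp.toLp_add 2 x y

private def pn (x : Fin n → EuclideanSpace ℝ (Fin d)) : ℝ := ‖P x‖

private lemma pn_eq (x : Fin n → EuclideanSpace ℝ (Fin d)) :
    pn x = Real.sqrt (∑ i, ‖x i‖ ^ 2) := PiLp.norm_eq_of_L2 (P x)

private lemma pn_coord_le (x : Fin n → EuclideanSpace ℝ (Fin d)) (i : Fin n) :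
    ‖x i‖ ≤ pn x := by
  rw [pn_eq, ← Real.sqrt_sq (norm_nonneg (x i))]
  apply Real.sqrt_le_sqrt
  exact Finset.single_le_sum (f := fun j => ‖x j‖ ^ 2)
    (fun j _ => sq_nonneg _) (Finset.mem_univ i)

private lemma pn_sum_le {ι : Type*} (s : Finset ι) (f : ι → (Fin n → EuclideanSpace ℝ (Fin d))) :
    pn (∑ a ∈ s, f a) ≤ ∑ a ∈ s, pn (f a) := by
  rw [pn, P_sum]; exact norm_sum_le s fun a => P (f a)

private lemma pn_add_le (x y : Fin n → EuclideanSpace ℝ (Fin d)) :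
    pn (x + y) ≤ pn x + pn y := by
  rw [pn, P_add]; exact norm_add_le _ _

private lemma pn_le_of_forall {C : ℝ} (hC : 0 ≤ C) (x : Fin n → EuclideanSpace ℝ (Fin d))
    (h : ∀ i, ‖x i‖ ≤ C) : pn x ≤ Real.sqrt n * C := by
  rw [pn_eq]
  have h1 : (∑ i, ‖x i‖ ^ 2) ≤ (n : ℝ) * C ^ 2 := by
    calc (∑ i : Fin n, ‖x i‖ ^ 2) ≤ ∑ _i : Fin n, C ^ 2 :=
          Finset.sum_le_sum fun i _ => pow_le_pow_left₀ (norm_nonneg _) (h i) 2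
      _ = (n : ℝ) * C ^ 2 := by simp [mul_comm]
  calc Real.sqrt (∑ i, ‖x i‖ ^ 2) ≤ Real.sqrt ((n : ℝ) * C ^ 2) := Real.sqrt_le_sqrt h1
    _ = Real.sqrt n * C := by
        rw [Real.sqrt_mul (Nat.cast_nonneg n), Real.sqrt_sq hC]

/-- matrix acting on a tuple of Euclidean vectors -/
private def mv (A : Matrix (Fin n) (Fin n) ℝ) (x : Fin n → EuclideanSpace ℝ (Fin d)) :
    Fin n → EuclideanSpace ℝ (Fin d) := fun i => ∑ j, A i j • x j

private lemma esum_apply {ι : Type*} (s : Finset ι) (f : ι → EuclideanSpace ℝ (Fin d))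
    (t : Fin d) : (∑ a ∈ s, f a) t = ∑ a ∈ s, f a t := by
  classical
  induction s using Finset.induction with
  | empty => rfl
  | insert _ _ h ih => rw [Finset.sum_insert h, Finset.sum_insert h, ← ih]; rfl

private lemma mv_apply_coord (A : Matrix (Fin n) (Fin n) ℝ)
    (x : Fin n → EuclideanSpace ℝ (Fin d)) (i : Fin n) (t : Fin d) :
    mv A x i t = A.mulVec (fun j => x j t) i := by
  rw [mv, esum_apply]
  simp [Matrix.mulVec, dotProduct, PiLp.smul_apply, smul_eq_mul]

private lemma mv_one (x : Fin n → EuclideanSpace ℝ (Fin d)) : mv 1 x = x := by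
  funext i
  simp [mv, Matrix.one_apply, Finset.sum_ite_eq, Finset.mem_univ]

private lemma mv_mul (A B : Matrix (Fin n) (Fin n) ℝ) (x : Fin n → EuclideanSpace ℝ (Fin d)) :
    mv (A * B) x = mv A (mv B x) := by
  funext i
  simp only [mv, Matrix.mul_apply]
  calc ∑ j, (∑ l, A i l * B l j) • x j
      = ∑ j, ∑ l, (A i l * B l j) • x j := by
        refine Finset.sum_congr rfl fun j _ => ?_
        rw [Finset.sum_smul]
    _ = ∑ l, ∑ j, (A i l * B l j) • x j := Finset.sum_comm
    _ = ∑ l, A i l • ∑ j, B l j • x j := by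
        refine Finset.sum_congr rfl fun l _ => ?_
        rw [Finset.smul_sum]
        refine Finset.sum_congr rfl fun j _ => ?_
        rw [mul_smul]

private lemma mv_sub (A B : Matrix (Fin n) (Fin n) ℝ) (x : Fin n → EuclideanSpace ℝ (Fin d)) :
    mv (A - B) x = mv A x - mv B x := by
  funext i
  simp [mv, sub_smul, Finset.sum_sub_distrib]

private lemma mv_sum {ι : Type*} (A : Matrix (Fin n) (Fin n) ℝ) (s : Finset ι)
    (f : ι → (Fin n → EuclideanSpace ℝ (Fin d))) :
    mv A (∑ a ∈ s, f a) = ∑ a ∈ s, mv A (f a) := by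
  funext i
  simp only [mv, Finset.sum_apply]
  rw [Finset.sum_comm]
  congr 1
  funext j
  rw [Finset.smul_sum]

private lemma pn_mv_le (A : Matrix (Fin n) (Fin n) ℝ) (lamm : ℝ) (hl : 0 ≤ lamm)
    (hA : ∀ v : Fin n → ℝ,
      Real.sqrt (∑ i, (A.mulVec v i) ^ 2) ≤ lamm * Real.sqrt (∑ i, (v i) ^ 2))
    (x : Fin n → EuclideanSpace ℝ (Fin d)) : pn (mv A x) ≤ lamm * pn x := by
  have normsq : ∀ (y : Fin n → EuclideanSpace ℝ (Fin d)),
      (∑ i, ‖y i‖ ^ 2) = ∑ i, ∑ t, (y i t) ^ 2 := by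
    intro y
    congr 1; funext i
    rw [EuclideanSpace.norm_eq, Real.sq_sqrt (by positivity)]
    simp [sq_abs]
  have key : ∀ v : Fin n → ℝ, (∑ i, (A.mulVec v i) ^ 2) ≤ lamm ^ 2 * ∑ i, (v i) ^ 2 := by
    intro v
    have h1 := hA v
    have h2 : (∑ i, (A.mulVec v i) ^ 2)
        = (Real.sqrt (∑ i, (A.mulVec v i) ^ 2)) ^ 2 :=
      (Real.sq_sqrt (by positivity)).symm
    rw [h2]
    calc (Real.sqrt (∑ i, (A.mulVec v i) ^ 2)) ^ 2
        ≤ (lamm * Real.sqrt (∑ i, (v i) ^ 2)) ^ 2 := by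
          apply pow_le_pow_left₀ (Real.sqrt_nonneg _) h1
      _ = lamm ^ 2 * ∑ i, (v i) ^ 2 := by
          rw [mul_pow, Real.sq_sqrt (by positivity)]
  rw [pn_eq, pn_eq, normsq, normsq]
  have hswap1 : (∑ i, ∑ t, (mv A x i t) ^ 2) = ∑ t, ∑ i, (A.mulVec (fun j => x j t) i) ^ 2 := by
    rw [Finset.sum_comm]
    congr 1; funext t; congr 1; funext i; rw [mv_apply_coord]
  have hswap2 : (∑ i, ∑ t, (x i t) ^ 2) = ∑ t : Fin d, ∑ i : Fin n, (x i t) ^ 2 :=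
    Finset.sum_comm
  rw [hswap1, hswap2]
  calc Real.sqrt (∑ t, ∑ i, (A.mulVec (fun j => x j t) i) ^ 2)
      ≤ Real.sqrt (∑ t : Fin d, lamm ^ 2 * ∑ i : Fin n, (x i t) ^ 2) := by
        apply Real.sqrt_le_sqrt
        exact Finset.sum_le_sum fun t _ => key _
    _ = lamm * Real.sqrt (∑ t : Fin d, ∑ i : Fin n, (x i t) ^ 2) := by
        rw [← Finset.mul_sum, Real.sqrt_mul (by positivity), Real.sqrt_sq hl]

end StmtAux

/-- Uniform bound on the tracked gradients: if `W` is doubly stochastic with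
`‖(Wᵐ − (1/n)𝟙𝟙ᵀ) v‖ ≤ λ₂ᵐ ‖v‖` for all `m ≥ 1` and all `v`, and the local gradients
satisfy `‖uⁱₖ‖ ≤ G`, then the gradient-tracking vectors satisfy
`‖dⁱₖ‖ ≤ 2nG(λ₂/(1−λ₂) + 1)`. -/
theorem stmt_4 (n d K : ℕ) (hn : 0 < n) (W : Matrix (Fin n) (Fin n) ℝ)
    (hpos : ∀ i j, 0 ≤ W i j) (hrow : ∀ i, ∑ j, W i j = 1) (hcol : ∀ j, ∑ i, W i j = 1)
    (lam : ℝ) (hlam0 : 0 ≤ lam) (hlam1 : lam < 1)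
    (hop : ∀ m : ℕ, 1 ≤ m → ∀ v : Fin n → ℝ,
      Real.sqrt (∑ i,
          ((W ^ m - (n : ℝ)⁻¹ • Matrix.of (fun _ _ => (1 : ℝ))).mulVec v i) ^ 2)
        ≤ lam ^ m * Real.sqrt (∑ i, (v i) ^ 2))
    (G : ℝ) (u : Fin n → ℕ → EuclideanSpace ℝ (Fin d))
    (hu : ∀ i k, 1 ≤ k → k ≤ K → ‖u i k‖ ≤ G)
    (g dd : Fin n → ℕ → EuclideanSpace ℝ (Fin d))
    (hg1 : ∀ i, g i 1 = u i 1)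
    (hd : ∀ i k, 1 ≤ k → k ≤ K → dd i k = ∑ j, W i j • g j k)
    (hgk : ∀ i k, 1 ≤ k → k < K → g i (k + 1) = u i (k + 1) - u i k + dd i k) :
    ∀ i k, 1 ≤ k → k ≤ K → ‖dd i k‖ ≤ 2 * n * G * (lam / (1 - lam) + 1) := by
  classical
  intro i k hk1 hkK
  have hG0 : 0 ≤ G := le_trans (norm_nonneg _) (hu i k hk1 hkK)
  set Jm : Matrix (Fin n) (Fin n) ℝ := (n : ℝ)⁻¹ • Matrix.of (fun _ _ => (1 : ℝ)) with hJm
  set δ : ℕ → (Fin n → EuclideanSpace ℝ (Fin d)) :=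
    fun s => if s = 1 then (fun j => u j 1) else (fun j => u j s - u j (s - 1)) with hδ
  -- telescoping sum of the increments
  have tele : ∀ m, 1 ≤ m → (∑ s ∈ Finset.Icc 1 m, δ s) = fun j => u j m := by
    intro m hm
    induction m, hm using Nat.le_induction with
    | base =>
      rw [Finset.Icc_self, Finset.sum_singleton]
      simp [hδ]
    | succ m hm ih =>
      rw [Finset.sum_Icc_succ_top (by omega : 1 ≤ m + 1), ih]
      have hne : m + 1 ≠ 1 := by omega
      funext j
      have hm0 : m ≠ 0 := by omega
      simp only [hδ, hne, if_false, Pi.add_apply]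
      simp [hm0]
  -- closed form for g
  have key : ∀ m, 1 ≤ m → m ≤ K →
      (fun j => g j m) = ∑ s ∈ Finset.Icc 1 m, mv (W ^ (m - s)) (δ s) := by
    intro m hm
    induction m, hm using Nat.le_induction with
    | base =>
      intro _
      rw [Finset.Icc_self, Finset.sum_singleton, Nat.sub_self, pow_zero, mv_one]
      funext j
      simp [hδ, hg1 j]
    | succ m hm ih =>
      intro hmK
      have hmK' : m ≤ K := by omega
      have hmltK : m < K := by omega
      have hgrec : (fun j => g j (m + 1)) = δ (m + 1) + mv W (fun l => g l m) := by
        funext j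
        rw [hgk j m hm hmltK, hd j m hm hmK']
        have hne : m + 1 ≠ 1 := by omega
        have hm0 : m ≠ 0 := by omega
        simp only [hδ, hne, if_false, mv, Pi.add_apply]
        simp [hm0]
      rw [hgrec, ih hmK', mv_sum, Finset.sum_Icc_succ_top (by omega : 1 ≤ m + 1)]
      have h1 : ∀ s ∈ Finset.Icc 1 m,
          mv W (mv (W ^ (m - s)) (δ s)) = mv (W ^ (m + 1 - s)) (δ s) := by
        intro s hs
        rw [Finset.mem_Icc] at hs
        have hms : m + 1 - s = (m - s) + 1 := by omega
        rw [← mv_mul, hms, pow_succ']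
      rw [Finset.sum_congr rfl h1, Nat.sub_self, pow_zero, mv_one]
      exact add_comm _ _
  -- closed form for dd
  have hdd : (fun j => dd j k) = mv W (fun l => g l k) := by
    funext j
    rw [hd j k hk1 hkK]
    rfl
  have hdform : (fun j => dd j k)
      = (∑ s ∈ Finset.Icc 1 k, mv (W ^ (k + 1 - s) - Jm) (δ s)) + mv Jm (fun j => u j k) := by
    rw [hdd, key k hk1 hkK, mv_sum]
    have h1 : ∀ s ∈ Finset.Icc 1 k,
        mv W (mv (W ^ (k - s)) (δ s))
          = mv (W ^ (k + 1 - s) - Jm) (δ s) + mv Jm (δ s) := by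
      intro s hs
      rw [Finset.mem_Icc] at hs
      have hms : k + 1 - s = (k - s) + 1 := by omega
      rw [← mv_mul, ← pow_succ', ← hms, mv_sub]
      abel
    rw [Finset.sum_congr rfl h1, Finset.sum_add_distrib, ← mv_sum, tele k hk1]
  -- bounds on the increments
  have hδbound : ∀ s ∈ Finset.Icc 1 k, pn (δ s) ≤ Real.sqrt n * (2 * G) := by
    intro s hs
    rw [Finset.mem_Icc] at hs
    apply pn_le_of_forall (by positivity)
    intro j
    by_cases h1 : s = 1
    · have := hu j 1 le_rfl (by omega)
      simp only [hδ, h1, if_pos rfl]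
      linarith
    · simp only [hδ, if_neg h1]
      calc ‖u j s - u j (s - 1)‖ ≤ ‖u j s‖ + ‖u j (s - 1)‖ := norm_sub_le _ _
        _ ≤ G + G := add_le_add (hu j s hs.1 (le_trans hs.2 hkK))
              (hu j (s - 1) (by omega) (by omega))
        _ = 2 * G := by ring
  have hopW : ∀ s ∈ Finset.Icc 1 k,
      pn (mv (W ^ (k + 1 - s) - Jm) (δ s)) ≤ lam ^ (k + 1 - s) * (Real.sqrt n * (2 * G)) := by
    intro s hs
    have hs' := hs
    rw [Finset.mem_Icc] at hs'
    have hm1 : 1 ≤ k + 1 - s := by omega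
    calc pn (mv (W ^ (k + 1 - s) - Jm) (δ s)) ≤ lam ^ (k + 1 - s) * pn (δ s) :=
          pn_mv_le _ _ (pow_nonneg hlam0 _) (hop (k + 1 - s) hm1) _
      _ ≤ lam ^ (k + 1 - s) * (Real.sqrt n * (2 * G)) :=
          mul_le_mul_of_nonneg_left (hδbound s hs) (pow_nonneg hlam0 _)
  -- bound on the average part
  have hJ : pn (mv Jm (fun j => u j k)) ≤ Real.sqrt n * G := by
    apply pn_le_of_forall hG0
    intro j
    have hmvJ : mv Jm (fun l => u l k) j = (n : ℝ)⁻¹ • ∑ l, u l k := by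
      rw [show mv Jm (fun l => u l k) j = ∑ l, Jm j l • u l k from rfl, Finset.smul_sum]
      refine Finset.sum_congr rfl fun l _ => ?_
      rw [hJm]
      simp [Matrix.smul_apply]
    rw [hmvJ, norm_smul]
    have h1 : ‖∑ l, u l k‖ ≤ (n : ℝ) * G := by
      calc ‖∑ l : Fin n, u l k‖ ≤ ∑ l : Fin n, ‖u l k‖ := norm_sum_le _ _
        _ ≤ ∑ _l : Fin n, G := Finset.sum_le_sum fun l _ => hu l k hk1 hkK
        _ = (n : ℝ) * G := by simp [mul_comm]
    have hn' : (0 : ℝ) < n := by exact_mod_cast hn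
    calc ‖(n : ℝ)⁻¹‖ * ‖∑ l, u l k‖ = (n : ℝ)⁻¹ * ‖∑ l, u l k‖ := by
          rw [Real.norm_eq_abs, abs_of_nonneg (by positivity)]
      _ ≤ (n : ℝ)⁻¹ * ((n : ℝ) * G) := by
          apply mul_le_mul_of_nonneg_left h1 (by positivity)
      _ = G := by field_simp
  -- geometric sum bound
  have hgeom : (∑ s ∈ Finset.Icc 1 k, lam ^ (k + 1 - s)) ≤ lam / (1 - lam) := by
    have hre : (∑ s ∈ Finset.Icc 1 k, lam ^ (k + 1 - s)) = ∑ m ∈ Finset.Icc 1 k, lam ^ m := by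
      refine Finset.sum_nbij' (fun s => k + 1 - s) (fun m => k + 1 - m)
        (fun a ha => ?_) (fun a ha => ?_) (fun a ha => ?_) (fun a ha => ?_) (fun a ha => ?_)
      · simp only [Finset.mem_Icc] at ha ⊢; omega
      · simp only [Finset.mem_Icc] at ha ⊢; omega
      · simp only [Finset.mem_Icc] at ha; beta_reduce; omega
      · simp only [Finset.mem_Icc] at ha; beta_reduce; omega
      · rfl
    rw [hre, ← Finset.Ico_add_one_right_eq_Icc]
    calc (∑ m ∈ Finset.Ico 1 (k + 1), lam ^ m) ≤ lam ^ 1 / (1 - lam) :=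
          geom_sum_Ico_le_of_lt_one hlam0 hlam1
      _ = lam / (1 - lam) := by rw [pow_one]
  -- assemble
  have main : pn (fun j => dd j k)
      ≤ Real.sqrt n * (2 * G) * (lam / (1 - lam)) + Real.sqrt n * G := by
    rw [hdform]
    calc pn ((∑ s ∈ Finset.Icc 1 k, mv (W ^ (k + 1 - s) - Jm) (δ s)) + mv Jm (fun j => u j k))
        ≤ pn (∑ s ∈ Finset.Icc 1 k, mv (W ^ (k + 1 - s) - Jm) (δ s))
            + pn (mv Jm (fun j => u j k)) := pn_add_le _ _
      _ ≤ (∑ s ∈ Finset.Icc 1 k, pn (mv (W ^ (k + 1 - s) - Jm) (δ s))) + Real.sqrt n * G :=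
          add_le_add (pn_sum_le _ _) hJ
      _ ≤ (∑ s ∈ Finset.Icc 1 k, lam ^ (k + 1 - s) * (Real.sqrt n * (2 * G)))
            + Real.sqrt n * G := by
          gcongr with s hs
          exact hopW s hs
      _ = (∑ s ∈ Finset.Icc 1 k, lam ^ (k + 1 - s)) * (Real.sqrt n * (2 * G))
            + Real.sqrt n * G := by rw [← Finset.sum_mul]
      _ ≤ (lam / (1 - lam)) * (Real.sqrt n * (2 * G)) + Real.sqrt n * G := by
          have h2 : 0 ≤ Real.sqrt n * (2 * G) := by positivity
          nlinarith [mul_le_mul_of_nonneg_right hgeom h2]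
      _ = Real.sqrt n * (2 * G) * (lam / (1 - lam)) + Real.sqrt n * G := by ring
  have hfinal : ‖dd i k‖ ≤ Real.sqrt n * (2 * G) * (lam / (1 - lam)) + Real.sqrt n * G :=
    le_trans (pn_coord_le (fun j => dd j k) i) main
  have hn1 : (1 : ℝ) ≤ (n : ℝ) := by exact_mod_cast hn
  have hsn : Real.sqrt n ≤ (n : ℝ) := by
    have h1 : Real.sqrt ((n : ℝ)) ≤ Real.sqrt ((n : ℝ) ^ 2) := Real.sqrt_le_sqrt (by nlinarith)
    rwa [Real.sqrt_sq (by linarith)] at h1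
  have hsn0 : (0 : ℝ) ≤ Real.sqrt n := Real.sqrt_nonneg _
  have hq : 0 ≤ lam / (1 - lam) := div_nonneg hlam0 (by linarith)
  calc ‖dd i k‖ ≤ Real.sqrt n * (2 * G) * (lam / (1 - lam)) + Real.sqrt n * G := hfinal
    _ ≤ 2 * n * G * (lam / (1 - lam) + 1) := by
        nlinarith [mul_nonneg (mul_nonneg hG0 hq) (sub_nonneg.2 hsn),
          mul_nonneg hG0 (sub_nonneg.2 hsn), mul_nonneg hG0 (by linarith : (0:ℝ) ≤ (n:ℝ))]
end

section
/- Let W ∈ ℝ^{n×n} be doubly stochastic and let λ₂ ∈ (0,1) be such that for every integer m ≥ 1 the operator norm of W^m − (1/n)·𝟙𝟙ᵀ is at most λ₂^m. Let u^i_k ∈ ℝ^d with ‖u^i_k‖ ≤ G, and on a probability space let ũ^i_k be random vectors in ℝ^d such that 𝔼[ũ^i_k] = u^i_k, ‖ũ^i_k‖ ≤ G₀ almost surely, 𝔼‖ũ^i_k − u^i_k‖² ≤ σ₀², and the noise vectors {ũ^i_k − u^i_k : 1 ≤ i ≤ n, 1 ≤ k ≤ K} are mutually independent. Let d^i_k be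 defined from the u^i_k by the gradient-tracking recursion (g^i_1 = u^i_1, d^i_k = Σ_j W_{ij} g^j_k, g^i_{k+1} = u^i_{k+1} − u^i_k + d^i_k), and let d̃^i_k be defined by the same recursion with ũ^i_k in place of u^i_k. Then for every i and k: 𝔼‖d^i_k − d̃^i_k‖² ≤ 4n[((G+G₀)/(1/λ₂ − 1))² + 2σ₀²]. -/
open MeasureTheory

private lemma sqrt_sq_norm (n : ℕ) (w : Fin n → ℝ) :
    Real.sqrt (∑ i, (w i) ^ 2) = ‖(WithLp.equiv 2 (Fin n → ℝ)).symm w‖ := by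
  rw [EuclideanSpace.norm_eq]
  congr 1
  refine Finset.sum_congr rfl fun i _ => ?_
  simp [Real.norm_eq_abs, sq_abs]

private lemma coord_abs_le_norm {d : ℕ} (x : EuclideanSpace ℝ (Fin d)) (c : Fin d) :
    |x c| ≤ ‖x‖ := by
  rw [EuclideanSpace.norm_eq, ← Real.sqrt_sq_eq_abs]
  apply Real.sqrt_le_sqrt
  calc (x c) ^ 2 = ‖x c‖ ^ 2 := by rw [Real.norm_eq_abs, sq_abs]
    _ ≤ ∑ i, ‖x i‖ ^ 2 :=
      Finset.single_le_sum (f := fun i => ‖x i‖ ^ 2) (fun i _ => sq_nonneg _) (Finset.mem_univ c)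

private lemma stacked_bound {n d : ℕ} (M : Matrix (Fin n) (Fin n) ℝ) (a : ℝ)
    (hM : ∀ y : Fin n → ℝ, Real.sqrt (∑ i, (M.mulVec y i) ^ 2) ≤ a * Real.sqrt (∑ i, (y i) ^ 2))
    (x : Fin n → EuclideanSpace ℝ (Fin d)) :
    ∑ i, ‖∑ p, M i p • x p‖ ^ 2 ≤ a ^ 2 * ∑ p, ‖x p‖ ^ 2 := by
  have key : ∀ y : Fin n → ℝ, ∑ i, (M.mulVec y i) ^ 2 ≤ a ^ 2 * ∑ i, (y i) ^ 2 := by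
    intro y
    have h3 : (0:ℝ) ≤ ∑ i, (M.mulVec y i) ^ 2 := Finset.sum_nonneg fun _ _ => sq_nonneg _
    calc ∑ i, (M.mulVec y i) ^ 2
        = (Real.sqrt (∑ i, (M.mulVec y i) ^ 2)) ^ 2 := (Real.sq_sqrt h3).symm
      _ ≤ (a * Real.sqrt (∑ i, (y i) ^ 2)) ^ 2 :=
          pow_le_pow_left₀ (Real.sqrt_nonneg _) (hM y) 2
      _ = a ^ 2 * ∑ i, (y i) ^ 2 := by
          rw [mul_pow, Real.sq_sqrt (Finset.sum_nonneg fun _ _ => sq_nonneg _)]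
  have hcoord : ∀ v : EuclideanSpace ℝ (Fin d), ‖v‖ ^ 2 = ∑ c, (v c) ^ 2 := by
    intro v
    rw [EuclideanSpace.norm_eq, Real.sq_sqrt (Finset.sum_nonneg fun _ _ => sq_nonneg _)]
    exact Finset.sum_congr rfl fun c _ => by rw [Real.norm_eq_abs, sq_abs]
  calc ∑ i, ‖∑ p, M i p • x p‖ ^ 2
      = ∑ i, ∑ c, (M.mulVec (fun p => x p c) i) ^ 2 := by
        refine Finset.sum_congr rfl fun i _ => ?_
        rw [hcoord]
        refine Finset.sum_congr rfl fun c _ => ?_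
        congr 1
        have : (∑ p, M i p • x p) c = ∑ p, M i p * x p c := by
          rw [show ((∑ p, M i p • x p) c) = ∑ p, (M i p • x p) c from
            by simp]
          exact Finset.sum_congr rfl fun p _ => rfl
        rw [this]
        simp [Matrix.mulVec, dotProduct]
    _ = ∑ c, ∑ i, (M.mulVec (fun p => x p c) i) ^ 2 := Finset.sum_comm
    _ ≤ ∑ c : Fin d, a ^ 2 * ∑ p, (x p c) ^ 2 := Finset.sum_le_sum fun c _ => key _
    _ = a ^ 2 * ∑ p, ‖x p‖ ^ 2 := by
        rw [← Finset.mul_sum]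
        congr 1
        rw [Finset.sum_comm]
        exact Finset.sum_congr rfl fun p _ => (hcoord (x p)).symm

set_option maxHeartbeats 1000000 in
/-- Variance bound for stochastic gradient tracking: if the exact local gradients `uⁱₖ`
are bounded by `G`, the stochastic estimates `ũⁱₖ` are unbiased, bounded by `G₀`, have
variance at most `σ₀²` and mutually independent noises, and `W` mixes with rate `λ₂`,
then the deterministic and stochastic gradient trackers satisfy
`𝔼‖dⁱₖ − d̃ⁱₖ‖² ≤ 4n[((G+G₀)/(1/λ₂ − 1))² + 2σ₀²]`. -/
theorem stmt_5 (n d K : ℕ) (hn : 0 < n) (W : Matrix (Fin n) (Fin n) ℝ)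
    (hpos : ∀ i j, 0 ≤ W i j) (hrow : ∀ i, ∑ j, W i j = 1) (hcol : ∀ j, ∑ i, W i j = 1)
    (lam : ℝ) (hlam0 : 0 < lam) (hlam1 : lam < 1)
    (hop : ∀ m : ℕ, 1 ≤ m → ∀ v : Fin n → ℝ,
      Real.sqrt (∑ i,
          ((W ^ m - (n : ℝ)⁻¹ • Matrix.of (fun _ _ => (1 : ℝ))).mulVec v i) ^ 2)
        ≤ lam ^ m * Real.sqrt (∑ i, (v i) ^ 2))
    (G G₀ σ₀ : ℝ)
    (Ω : Type*) [MeasurableSpace Ω] (μ : Measure Ω) [IsProbabilityMeasure μ]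
    (u : Fin n → ℕ → EuclideanSpace ℝ (Fin d))
    (ut : Fin n → ℕ → Ω → EuclideanSpace ℝ (Fin d))
    (hu : ∀ i k, 1 ≤ k → k ≤ K → ‖u i k‖ ≤ G)
    (hmeas : ∀ i k, Measurable (ut i k))
    (hunbiased : ∀ i k, 1 ≤ k → k ≤ K → ∫ ω, ut i k ω ∂μ = u i k)
    (hbdd : ∀ i k, 1 ≤ k → k ≤ K → ∀ᵐ ω ∂μ, ‖ut i k ω‖ ≤ G₀)
    (hvar : ∀ i k, 1 ≤ k → k ≤ K → ∫ ω, ‖ut i k ω - u i k‖ ^ 2 ∂μ ≤ σ₀ ^ 2)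
    (hindep : ProbabilityTheory.iIndepFun
      (fun p : Fin n × (Set.Icc 1 K) => fun ω => ut p.1 p.2 ω - u p.1 p.2) μ)
    (g dd : Fin n → ℕ → EuclideanSpace ℝ (Fin d))
    (hg1 : ∀ i, g i 1 = u i 1)
    (hd : ∀ i k, 1 ≤ k → k ≤ K → dd i k = ∑ j, W i j • g j k)
    (hgk : ∀ i k, 1 ≤ k → k < K → g i (k + 1) = u i (k + 1) - u i k + dd i k)
    (gt ddt : Fin n → ℕ → Ω → EuclideanSpace ℝ (Fin d))
    (hgt1 : ∀ i ω, gt i 1 ω = ut i 1 ω)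
    (hddt : ∀ i k, 1 ≤ k → k ≤ K → ∀ ω, ddt i k ω = ∑ j, W i j • gt j k ω)
    (hgtk : ∀ i k, 1 ≤ k → k < K → ∀ ω,
      gt i (k + 1) ω = ut i (k + 1) ω - ut i k ω + ddt i k ω) :
    ∀ i k, 1 ≤ k → k ≤ K →
      ∫ ω, ‖dd i k - ddt i k ω‖ ^ 2 ∂μ ≤
        4 * n * (((G + G₀) / (1 / lam - 1)) ^ 2 + 2 * σ₀ ^ 2) := by
  intro i k hk1 hkK
  -- the noise processes
  obtain ⟨e, he⟩ : ∃ e : Fin n → ℕ → Ω → EuclideanSpace ℝ (Fin d),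
      e = fun p s ω => ut p s ω - u p s := ⟨_, rfl⟩
  obtain ⟨F, hF⟩ : ∃ F : ℕ → Fin n → Ω → EuclideanSpace ℝ (Fin d),
      F = fun t j ω => e j t ω +
        ∑ s ∈ Finset.Ico 1 t, ∑ p, ((W ^ (t - s) - W ^ (t - s - 1)) j p) • e p s ω := ⟨_, rfl⟩
  obtain ⟨A, hA⟩ : ∃ A : ℕ → Matrix (Fin n) (Fin n) ℝ,
      A = fun s => if s = k then W else W ^ (k + 1 - s) - W ^ (k - s) := ⟨_, rfl⟩
  obtain ⟨v, hv⟩ : ∃ v : ℕ → Ω → EuclideanSpace ℝ (Fin d),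
      v = fun s ω => ∑ p, (A s) i p • e p s ω := ⟨_, rfl⟩
  have hG : 0 ≤ G := le_trans (norm_nonneg _) (hu i k hk1 hkK)
  have hG0 : 0 ≤ G₀ := by
    obtain ⟨ω, hω⟩ := (hbdd i k hk1 hkK).exists
    exact le_trans (norm_nonneg _) hω
  have hGG0 : 0 ≤ G + G₀ := add_nonneg hG hG0
  have hemeas : ∀ p s, Measurable (e p s) := by
    intro p s
    simp only [he]
    exact (hmeas p s).sub measurable_const
  have hebdd : ∀ p s, 1 ≤ s → s ≤ K → ∀ᵐ ω ∂μ, ‖e p s ω‖ ≤ G + G₀ := by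
    intro p s h1 h2
    filter_upwards [hbdd p s h1 h2] with ω hω
    simp only [he]
    calc ‖ut p s ω - u p s‖ ≤ ‖ut p s ω‖ + ‖u p s‖ := norm_sub_le _ _
      _ ≤ G₀ + G := add_le_add hω (hu p s h1 h2)
      _ = G + G₀ := add_comm _ _
  have heint : ∀ p s, 1 ≤ s → s ≤ K → Integrable (e p s) μ := fun p s h1 h2 =>
    Integrable.mono' (integrable_const (G + G₀)) (hemeas p s).aestronglyMeasurable
      (hebdd p s h1 h2)
  have hezero : ∀ p s, 1 ≤ s → s ≤ K → ∫ ω, e p s ω ∂μ = 0 := by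
    intro p s h1 h2
    simp only [he]
    rw [integral_sub (Integrable.mono' (integrable_const G₀)
        (hmeas p s).aestronglyMeasurable (hbdd p s h1 h2)) (integrable_const _),
      hunbiased p s h1 h2, integral_const]
    simp
  have hsqint : ∀ p s, 1 ≤ s → s ≤ K → Integrable (fun ω => ‖e p s ω‖ ^ 2) μ := by
    intro p s h1 h2
    refine Integrable.mono' (integrable_const ((G + G₀) ^ 2))
      ((hemeas p s).norm.pow_const 2).aestronglyMeasurable ?_
    filter_upwards [hebdd p s h1 h2] with ω hω
    rw [Real.norm_eq_abs, abs_of_nonneg (sq_nonneg _)]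
    exact pow_le_pow_left₀ (norm_nonneg _) hω 2
  have hinner_int : ∀ p s q t, 1 ≤ s → s ≤ K → 1 ≤ t → t ≤ K →
      Integrable (fun ω => (inner ℝ (e p s ω) (e q t ω) : ℝ)) μ := by
    intro p s q t hs1 hs2 ht1 ht2
    refine Integrable.mono' (integrable_const ((G + G₀) * (G + G₀)))
      ((hemeas p s).inner (hemeas q t)).aestronglyMeasurable ?_
    filter_upwards [hebdd p s hs1 hs2, hebdd q t ht1 ht2] with ω h1 h2
    calc ‖(inner ℝ (e p s ω) (e q t ω) : ℝ)‖ ≤ ‖e p s ω‖ * ‖e q t ω‖ := norm_inner_le_norm _ _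
      _ ≤ (G + G₀) * (G + G₀) := mul_le_mul h1 h2 (norm_nonneg _) hGG0
  -- cross terms vanish
  have hcross : ∀ p s q t, 1 ≤ s → s ≤ K → 1 ≤ t → t ≤ K → s ≠ t →
      ∫ ω, (inner ℝ (e p s ω) (e q t ω) : ℝ) ∂μ = 0 := by
    intro p s q t hs1 hs2 ht1 ht2 hst
    have hXY : ProbabilityTheory.IndepFun (e p s) (e q t) μ := by
      have h := hindep.indepFun
        (i := (p, ⟨s, Set.mem_Icc.2 ⟨hs1, hs2⟩⟩)) (j := (q, ⟨t, Set.mem_Icc.2 ⟨ht1, ht2⟩⟩))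
        (by
          intro hEq
          apply hst
          have := congrArg (fun x : Fin n × (Set.Icc 1 K) => (x.2 : ℕ)) hEq
          simpa using this)
      simp only [he]
      exact h
    have hmc : ∀ c : Fin d, Measurable fun x : EuclideanSpace ℝ (Fin d) => x c := fun c =>
      (EuclideanSpace.proj c : EuclideanSpace ℝ (Fin d) →L[ℝ] ℝ).continuous.measurable
    have hcint : ∀ p' s' c, 1 ≤ s' → s' ≤ K → Integrable (fun ω => e p' s' ω c) μ := by
      intro p' s' c h1 h2
      refine Integrable.mono' (integrable_const (G + G₀))
        ((hmc c).comp (hemeas p' s')).aestronglyMeasurable ?_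
      filter_upwards [hebdd p' s' h1 h2] with ω hω
      exact le_trans (coord_abs_le_norm _ c) hω
    have hczero : ∀ p' s' c, 1 ≤ s' → s' ≤ K → ∫ ω, e p' s' ω c ∂μ = 0 := by
      intro p' s' c h1 h2
      have hcc := ContinuousLinearMap.integral_comp_comm
        (EuclideanSpace.proj c : EuclideanSpace ℝ (Fin d) →L[ℝ] ℝ) (heint p' s' h1 h2)
      simp only [PiLp.proj_apply] at hcc
      rw [hcc, hezero p' s' h1 h2]
      simp
    have hsumeq : ∀ ω, (inner ℝ (e p s ω) (e q t ω) : ℝ) = ∑ c, e p s ω c * e q t ω c := by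
      intro ω
      rw [PiLp.inner_apply]
      exact Finset.sum_congr rfl fun c _ => by
        simp [RCLike.inner_apply, starRingEnd_apply, star_trivial, mul_comm]
    simp only [hsumeq]
    rw [integral_finset_sum]
    · refine Finset.sum_eq_zero fun c _ => ?_
      have h1 : ProbabilityTheory.IndepFun (fun ω => e p s ω c) (fun ω => e q t ω c) μ :=
        hXY.comp (hmc c) (hmc c)
      rw [h1.integral_fun_mul_eq_mul_integral (hcint p s c hs1 hs2).aestronglyMeasurable
          (hcint q t c ht1 ht2).aestronglyMeasurable,
        hczero p s c hs1 hs2, zero_mul]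
    · intro c _
      refine Integrable.mono' (integrable_const ((G + G₀) * (G + G₀)))
        (((hmc c).comp (hemeas p s)).mul ((hmc c).comp (hemeas q t))).aestronglyMeasurable ?_
      filter_upwards [hebdd p s hs1 hs2, hebdd q t ht1 ht2] with ω h1 h2
      rw [Real.norm_eq_abs, abs_mul]
      exact mul_le_mul (le_trans (coord_abs_le_norm _ c) h1)
        (le_trans (coord_abs_le_norm _ c) h2) (abs_nonneg _) hGG0
  -- the key algebraic step
  have hstep : ∀ t (j : Fin n) ω, 1 ≤ t →
      ∑ l, W j l • F t l ω
        = e j t ω + ∑ s ∈ Finset.Ico 1 (t + 1), ∑ p,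
            ((W ^ (t + 1 - s) - W ^ (t - s)) j p) • e p s ω := by
    intro t j ω ht
    simp only [hF]
    rw [Finset.sum_Ico_succ_top ht]
    have htop : ∑ p, ((W ^ (t + 1 - t) - W ^ (t - t)) j p) • e p t ω
        = (∑ p, W j p • e p t ω) - e j t ω := by
      have h1 : t + 1 - t = 1 := by omega
      have h2 : t - t = 0 := by omega
      rw [h1, h2, pow_one, pow_zero]
      rw [show (∑ p, ((W - 1) j p) • e p t ω)
          = ∑ p, (W j p • e p t ω - ((1 : Matrix (Fin n) (Fin n) ℝ) j p) • e p t ω) from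
        Finset.sum_congr rfl fun p _ => by rw [Matrix.sub_apply, sub_smul]]
      rw [Finset.sum_sub_distrib]
      congr 1
      simp [Matrix.one_apply, ite_smul]
    rw [htop]
    have hmix : ∑ l, W j l • (e l t ω +
          ∑ s ∈ Finset.Ico 1 t, ∑ p, ((W ^ (t - s) - W ^ (t - s - 1)) l p) • e p s ω)
        = (∑ l, W j l • e l t ω) +
          ∑ s ∈ Finset.Ico 1 t, ∑ p, ((W ^ (t + 1 - s) - W ^ (t - s)) j p) • e p s ω := by
      rw [show (∑ l, W j l • (e l t ω +
            ∑ s ∈ Finset.Ico 1 t, ∑ p, ((W ^ (t - s) - W ^ (t - s - 1)) l p) • e p s ω))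
          = ∑ l, (W j l • e l t ω +
            ∑ s ∈ Finset.Ico 1 t, ∑ p, (W j l * ((W ^ (t - s) - W ^ (t - s - 1)) l p)) • e p s ω)
        from Finset.sum_congr rfl fun l _ => by
          rw [smul_add]
          congr 1
          rw [Finset.smul_sum]
          exact Finset.sum_congr rfl fun s _ => by
            rw [Finset.smul_sum]
            exact Finset.sum_congr rfl fun p _ => (smul_smul _ _ _)]
      rw [Finset.sum_add_distrib]
      congr 1
      rw [Finset.sum_comm]
      refine Finset.sum_congr rfl fun s hs => ?_
      obtain ⟨hs1, hs2⟩ := Finset.mem_Ico.1 hs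
      rw [Finset.sum_comm]
      refine Finset.sum_congr rfl fun p _ => ?_
      rw [← Finset.sum_smul]
      congr 1
      rw [show (∑ l, W j l * ((W ^ (t - s) - W ^ (t - s - 1)) l p))
          = (W * (W ^ (t - s) - W ^ (t - s - 1))) j p from (Matrix.mul_apply).symm]
      have hx1 : t + 1 - s = (t - s) + 1 := by omega
      have hx2 : t - s = (t - s - 1) + 1 := by omega
      have e1 : W * W ^ (t - s) = W ^ (t + 1 - s) := by rw [hx1, pow_succ']
      have e2 : W * W ^ (t - s - 1) = W ^ (t - s) := by conv_rhs => rw [hx2, pow_succ']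
      rw [Matrix.mul_sub, e1, e2]
    rw [hmix]
    abel
  -- the recursion identity
  have hFmain : ∀ t, 1 ≤ t → t ≤ K → ∀ (j : Fin n) ω, gt j t ω - g j t = F t j ω := by
    intro t
    induction t with
    | zero => intro h1 _; exact absurd h1 (by omega)
    | succ m ih =>
      intro h1 hmK j ω
      rcases Nat.eq_zero_or_pos m with rfl | hm
      · simp only [hF, Finset.Ico_self, Finset.sum_empty, add_zero]
        rw [hgt1, hg1]
        simp [he]
      · have hmK' : m < K := by omega
        rw [hgtk j m hm hmK', hgk j m hm hmK', hddt j m hm (le_of_lt hmK'),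
          hd j m hm (le_of_lt hmK')]
        have hsub : (∑ l, W j l • gt l m ω) - (∑ l, W j l • g l m)
            = ∑ l, W j l • F m l ω := by
          rw [← Finset.sum_sub_distrib]
          exact Finset.sum_congr rfl fun l _ => by
            rw [← smul_sub, ih hm (le_of_lt hmK') l ω]
        have hS := hstep m j ω hm
        have lhs_eq : (ut j (m + 1) ω - ut j m ω + ∑ l, W j l • gt l m ω)
            - (u j (m + 1) - u j m + ∑ l, W j l • g l m)
            = e j (m + 1) ω - e j m ω + ∑ l, W j l • F m l ω := by
          rw [← hsub]
          simp only [he]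
          abel
        rw [lhs_eq, hS]
        simp only [hF]
        have hexp : ∑ s ∈ Finset.Ico 1 (m + 1), ∑ p,
              ((W ^ (m + 1 - s) - W ^ (m + 1 - s - 1)) j p) • e p s ω
            = ∑ s ∈ Finset.Ico 1 (m + 1), ∑ p,
              ((W ^ (m + 1 - s) - W ^ (m - s)) j p) • e p s ω := by
          refine Finset.sum_congr rfl fun s _ => ?_
          have : m + 1 - s - 1 = m - s := by omega
          rw [this]
        rw [hexp]
        abel
  -- the decomposition of the tracker difference
  have hDk : ∀ ω, ddt i k ω - dd i k = ∑ s ∈ Finset.Icc 1 k, v s ω := by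
    intro ω
    have h1 : ddt i k ω - dd i k = ∑ l, W i l • F k l ω := by
      rw [hddt i k hk1 hkK ω, hd i k hk1 hkK, ← Finset.sum_sub_distrib]
      exact Finset.sum_congr rfl fun l _ => by rw [← smul_sub, hFmain k hk1 hkK l ω]
    rw [h1, hstep k i ω hk1, ← Finset.Ico_add_one_right_eq_Icc,
      Finset.sum_Ico_succ_top hk1, Finset.sum_Ico_succ_top hk1]
    have hvk : v k ω = ∑ p, W i p • e p k ω := by
      simp [hv, hA]
    have hvs : ∀ s ∈ Finset.Ico 1 k, v s ω
        = ∑ p, ((W ^ (k + 1 - s) - W ^ (k - s)) i p) • e p s ω := by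
      intro s hs
      obtain ⟨hs1, hs2⟩ := Finset.mem_Ico.1 hs
      simp only [hv, hA]
      rw [if_neg (by omega)]
    have hTk : ∑ p, ((W ^ (k + 1 - k) - W ^ (k - k)) i p) • e p k ω
        = (∑ p, W i p • e p k ω) - e i k ω := by
      have h1 : k + 1 - k = 1 := by omega
      have h2 : k - k = 0 := by omega
      rw [h1, h2, pow_one, pow_zero]
      rw [show (∑ p, ((W - 1) i p) • e p k ω)
          = ∑ p, (W i p • e p k ω - ((1 : Matrix (Fin n) (Fin n) ℝ) i p) • e p k ω) from
        Finset.sum_congr rfl fun p _ => by rw [Matrix.sub_apply, sub_smul]]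
      rw [Finset.sum_sub_distrib]
      congr 1
      simp [Matrix.one_apply, ite_smul]
    rw [Finset.sum_congr rfl hvs, hvk, hTk]
    abel
  -- expanding the squared norm
  have hvinner : ∀ s t ω, (inner ℝ (v s ω) (v t ω) : ℝ)
      = ∑ p, ∑ q, (A s i p * A t i q) * (inner ℝ (e p s ω) (e q t ω) : ℝ) := by
    intro s t ω
    simp only [hv]
    rw [sum_inner]
    refine Finset.sum_congr rfl fun p _ => ?_
    rw [inner_sum]
    refine Finset.sum_congr rfl fun q _ => ?_
    rw [real_inner_smul_left, real_inner_smul_right]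
    ring
  have hvint : ∀ s t, 1 ≤ s → s ≤ K → 1 ≤ t → t ≤ K →
      Integrable (fun ω => (inner ℝ (v s ω) (v t ω) : ℝ)) μ := by
    intro s t hs1 hs2 ht1 ht2
    rw [show (fun ω => (inner ℝ (v s ω) (v t ω) : ℝ))
        = fun ω => ∑ p, ∑ q, (A s i p * A t i q) * (inner ℝ (e p s ω) (e q t ω) : ℝ) from
      funext fun ω => hvinner s t ω]
    exact integrable_finset_sum _ fun p _ => integrable_finset_sum _ fun q _ =>
      (hinner_int p s q t hs1 hs2 ht1 ht2).const_mul _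
  have hcrossv : ∀ s t, 1 ≤ s → s ≤ K → 1 ≤ t → t ≤ K → s ≠ t →
      ∫ ω, (inner ℝ (v s ω) (v t ω) : ℝ) ∂μ = 0 := by
    intro s t hs1 hs2 ht1 ht2 hst
    simp only [hvinner]
    rw [integral_finset_sum _ (fun p _ => integrable_finset_sum _ fun q _ =>
      (hinner_int p s q t hs1 hs2 ht1 ht2).const_mul _)]
    refine Finset.sum_eq_zero fun p _ => ?_
    rw [integral_finset_sum _ (fun q _ => (hinner_int p s q t hs1 hs2 ht1 ht2).const_mul _)]
    refine Finset.sum_eq_zero fun q _ => ?_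
    rw [MeasureTheory.integral_const_mul, hcross p s q t hs1 hs2 ht1 ht2 hst, mul_zero]
  have hmemK : ∀ s ∈ Finset.Icc 1 k, 1 ≤ s ∧ s ≤ K := by
    intro s hs
    obtain ⟨h1, h2⟩ := Finset.mem_Icc.1 hs
    exact ⟨h1, le_trans h2 hkK⟩
  have key : ∫ ω, ‖dd i k - ddt i k ω‖ ^ 2 ∂μ
      = ∑ s ∈ Finset.Icc 1 k, ∫ ω, ‖v s ω‖ ^ 2 ∂μ := by
    have h1 : ∀ ω, ‖dd i k - ddt i k ω‖ ^ 2
        = ∑ s ∈ Finset.Icc 1 k, ∑ t ∈ Finset.Icc 1 k, (inner ℝ (v s ω) (v t ω) : ℝ) := by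
      intro ω
      rw [norm_sub_rev, hDk ω, ← real_inner_self_eq_norm_sq]
      simp only [sum_inner, inner_sum]
      exact Finset.sum_comm
    calc ∫ ω, ‖dd i k - ddt i k ω‖ ^ 2 ∂μ
        = ∫ ω, ∑ s ∈ Finset.Icc 1 k, ∑ t ∈ Finset.Icc 1 k,
            (inner ℝ (v s ω) (v t ω) : ℝ) ∂μ := by simp only [h1]
      _ = ∑ s ∈ Finset.Icc 1 k, ∑ t ∈ Finset.Icc 1 k,
            ∫ ω, (inner ℝ (v s ω) (v t ω) : ℝ) ∂μ := by
          rw [integral_finset_sum _ (fun s hs => integrable_finset_sum _ fun t ht =>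
            hvint s t (hmemK s hs).1 (hmemK s hs).2 (hmemK t ht).1 (hmemK t ht).2)]
          exact Finset.sum_congr rfl fun s hs => integral_finset_sum _ fun t ht =>
            hvint s t (hmemK s hs).1 (hmemK s hs).2 (hmemK t ht).1 (hmemK t ht).2
      _ = ∑ s ∈ Finset.Icc 1 k, ∫ ω, (inner ℝ (v s ω) (v s ω) : ℝ) ∂μ := by
          refine Finset.sum_congr rfl fun s hs => ?_
          exact Finset.sum_eq_single_of_mem s hs fun t ht hts =>
            hcrossv s t (hmemK s hs).1 (hmemK s hs).2 (hmemK t ht).1 (hmemK t ht).2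
              (fun h => hts h.symm)
      _ = ∑ s ∈ Finset.Icc 1 k, ∫ ω, ‖v s ω‖ ^ 2 ∂μ := by
          simp only [real_inner_self_eq_norm_sq]
  -- diagonal bound at s = k
  have hWle1 : ∀ p, W i p ≤ 1 := by
    intro p
    calc W i p ≤ ∑ q, W i q :=
          Finset.single_le_sum (f := fun q => W i q) (fun q _ => hpos i q) (Finset.mem_univ p)
      _ = 1 := hrow i
  have hvarE : ∀ p, ∫ ω, ‖e p k ω‖ ^ 2 ∂μ ≤ σ₀ ^ 2 := by
    intro p
    simp only [he]
    exact hvar p k hk1 hkK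
  have hBk : ∫ ω, ‖v k ω‖ ^ 2 ∂μ ≤ (n : ℝ) * σ₀ ^ 2 := by
    have hvk : ∀ ω, v k ω = ∑ p, W i p • e p k ω := by intro ω; simp [hv, hA]
    have hgint : Integrable (fun ω => (n : ℝ) * ∑ p, (W i p) ^ 2 * ‖e p k ω‖ ^ 2) μ :=
      (integrable_finset_sum _ fun p _ => (hsqint p k hk1 hkK).const_mul _).const_mul _
    have hmono : ∫ ω, ‖v k ω‖ ^ 2 ∂μ
        ≤ ∫ ω, (n : ℝ) * ∑ p, (W i p) ^ 2 * ‖e p k ω‖ ^ 2 ∂μ := by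
      refine integral_mono_of_nonneg (Filter.Eventually.of_forall fun ω => sq_nonneg _) hgint
        (Filter.Eventually.of_forall fun ω => ?_)
      show ‖v k ω‖ ^ 2 ≤ (n : ℝ) * ∑ p, (W i p) ^ 2 * ‖e p k ω‖ ^ 2
      rw [hvk ω]
      calc ‖∑ p, W i p • e p k ω‖ ^ 2 ≤ (∑ p, W i p * ‖e p k ω‖) ^ 2 := by
            refine pow_le_pow_left₀ (norm_nonneg _) ?_ 2
            refine (norm_sum_le _ _).trans (le_of_eq (Finset.sum_congr rfl fun p _ => ?_))
            rw [norm_smul, Real.norm_eq_abs, abs_of_nonneg (hpos i p)]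
        _ ≤ (∑ _p : Fin n, (1:ℝ) ^ 2) * ∑ p, (W i p * ‖e p k ω‖) ^ 2 := by
            have := Finset.sum_mul_sq_le_sq_mul_sq Finset.univ (fun _ : Fin n => (1:ℝ))
              (fun p => W i p * ‖e p k ω‖)
            simpa using this
        _ = (n:ℝ) * ∑ p, (W i p) ^ 2 * ‖e p k ω‖ ^ 2 := by
            simp [mul_pow, Finset.card_univ]
    refine hmono.trans ?_
    have hint_eq : ∫ ω, (n : ℝ) * ∑ p, (W i p) ^ 2 * ‖e p k ω‖ ^ 2 ∂μ
        = (n:ℝ) * ∑ p, (W i p) ^ 2 * ∫ ω, ‖e p k ω‖ ^ 2 ∂μ := by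
      rw [MeasureTheory.integral_const_mul,
        integral_finset_sum _ (fun p _ => (hsqint p k hk1 hkK).const_mul _)]
      congr 1
      exact Finset.sum_congr rfl fun p _ => MeasureTheory.integral_const_mul _ _
    rw [hint_eq]
    have hσ : (0:ℝ) ≤ σ₀ ^ 2 := sq_nonneg _
    calc (n:ℝ) * ∑ p, (W i p) ^ 2 * ∫ ω, ‖e p k ω‖ ^ 2 ∂μ
        ≤ (n:ℝ) * ∑ p, (W i p) ^ 2 * σ₀ ^ 2 := by
          refine mul_le_mul_of_nonneg_left (Finset.sum_le_sum fun p _ => ?_) (by positivity)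
          exact mul_le_mul_of_nonneg_left (hvarE p) (sq_nonneg _)
      _ ≤ (n:ℝ) * σ₀ ^ 2 := by
          refine mul_le_mul_of_nonneg_left ?_ (by positivity)
          calc ∑ p, (W i p) ^ 2 * σ₀ ^ 2 ≤ ∑ p, W i p * σ₀ ^ 2 := by
                refine Finset.sum_le_sum fun p _ => mul_le_mul_of_nonneg_right ?_ hσ
                nlinarith [hpos i p, hWle1 p]
            _ = (∑ p, W i p) * σ₀ ^ 2 := by rw [Finset.sum_mul]
            _ = σ₀ ^ 2 := by rw [hrow i, one_mul]
  -- diagonal bounds for s < k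
  have hBs : ∀ s ∈ Finset.Ico 1 k, ∫ ω, ‖v s ω‖ ^ 2 ∂μ
      ≤ (lam ^ (k + 1 - s) + lam ^ (k - s)) ^ 2 * ((n : ℝ) * (G + G₀) ^ 2) := by
    intro s hs
    obtain ⟨hs1, hs2⟩ := Finset.mem_Ico.1 hs
    have hopB : ∀ y : Fin n → ℝ,
        Real.sqrt (∑ i', ((W ^ (k + 1 - s) - W ^ (k - s)).mulVec y i') ^ 2)
          ≤ (lam ^ (k + 1 - s) + lam ^ (k - s)) * Real.sqrt (∑ i', (y i') ^ 2) := by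
      intro y
      have hsplit : W ^ (k + 1 - s) - W ^ (k - s)
          = (W ^ (k + 1 - s) - (n : ℝ)⁻¹ • Matrix.of (fun _ _ => (1:ℝ)))
            - (W ^ (k - s) - (n : ℝ)⁻¹ • Matrix.of (fun _ _ => (1:ℝ))) :=
        (sub_sub_sub_cancel_right _ _ _).symm
      rw [hsplit, Matrix.sub_mulVec]
      have tri : Real.sqrt (∑ i',
            (((W ^ (k + 1 - s) - (n : ℝ)⁻¹ • Matrix.of (fun _ _ => (1:ℝ))).mulVec y
              - (W ^ (k - s) - (n : ℝ)⁻¹ • Matrix.of (fun _ _ => (1:ℝ))).mulVec y) i') ^ 2)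
          ≤ Real.sqrt (∑ i',
              ((W ^ (k + 1 - s) - (n : ℝ)⁻¹ • Matrix.of (fun _ _ => (1:ℝ))).mulVec y i') ^ 2)
            + Real.sqrt (∑ i',
              ((W ^ (k - s) - (n : ℝ)⁻¹ • Matrix.of (fun _ _ => (1:ℝ))).mulVec y i') ^ 2) := by
        rw [sqrt_sq_norm, sqrt_sq_norm, sqrt_sq_norm]
        have heq : (WithLp.equiv 2 (Fin n → ℝ)).symm
              ((W ^ (k + 1 - s) - (n : ℝ)⁻¹ • Matrix.of (fun _ _ => (1:ℝ))).mulVec y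
                - (W ^ (k - s) - (n : ℝ)⁻¹ • Matrix.of (fun _ _ => (1:ℝ))).mulVec y)
            = (WithLp.equiv 2 (Fin n → ℝ)).symm
                ((W ^ (k + 1 - s) - (n : ℝ)⁻¹ • Matrix.of (fun _ _ => (1:ℝ))).mulVec y)
              - (WithLp.equiv 2 (Fin n → ℝ)).symm
                ((W ^ (k - s) - (n : ℝ)⁻¹ • Matrix.of (fun _ _ => (1:ℝ))).mulVec y) := rfl
        rw [heq]
        exact norm_sub_le _ _
      refine tri.trans ?_
      have h1 := hop (k + 1 - s) (by omega) y
      have h2 := hop (k - s) (by omega) y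
      rw [add_mul]
      exact add_le_add h1 h2
    have hvs_eq : ∀ ω, v s ω = ∑ p, ((W ^ (k + 1 - s) - W ^ (k - s)) i p) • e p s ω := by
      intro ω
      simp only [hv, hA]
      rw [if_neg (by omega)]
    have hsK : s ≤ K := by omega
    have hpt : ∀ᵐ ω ∂μ, ‖v s ω‖ ^ 2
        ≤ (lam ^ (k + 1 - s) + lam ^ (k - s)) ^ 2 * ((n : ℝ) * (G + G₀) ^ 2) := by
      have hall : ∀ᵐ ω ∂μ, ∀ p, ‖e p s ω‖ ≤ G + G₀ :=
        (MeasureTheory.ae_all_iff).2 fun p => hebdd p s hs1 hsK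
      filter_upwards [hall] with ω hω
      have h1 : ‖v s ω‖ ^ 2
          ≤ ∑ i', ‖∑ p, ((W ^ (k + 1 - s) - W ^ (k - s)) i' p) • e p s ω‖ ^ 2 := by
        rw [hvs_eq ω]
        exact Finset.single_le_sum
          (f := fun i' => ‖∑ p, ((W ^ (k + 1 - s) - W ^ (k - s)) i' p) • e p s ω‖ ^ 2)
          (fun i' _ => sq_nonneg _) (Finset.mem_univ i)
      refine h1.trans ((stacked_bound _ _ hopB fun p => e p s ω).trans ?_)
      refine mul_le_mul_of_nonneg_left ?_ (sq_nonneg _)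
      calc ∑ p, ‖e p s ω‖ ^ 2 ≤ ∑ _p : Fin n, (G + G₀) ^ 2 :=
            Finset.sum_le_sum fun p _ => pow_le_pow_left₀ (norm_nonneg _) (hω p) 2
        _ = (n : ℝ) * (G + G₀) ^ 2 := by simp [Finset.card_univ]
    refine (integral_mono_of_nonneg (Filter.Eventually.of_forall fun ω => sq_nonneg _)
      (integrable_const _) hpt).trans ?_
    rw [integral_const]
    simp
  -- geometric sum bound
  have hr1 : lam ^ 2 < 1 := by nlinarith
  have hr0 : (0:ℝ) ≤ lam ^ 2 := sq_nonneg _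
  have hgeo : ∑ s ∈ Finset.Ico 1 k, (lam ^ (k + 1 - s) + lam ^ (k - s)) ^ 2
      ≤ 4 * (lam ^ 2 / (1 - lam ^ 2)) := by
    have hstep1 : ∀ s ∈ Finset.Ico 1 k, (lam ^ (k + 1 - s) + lam ^ (k - s)) ^ 2
        ≤ 4 * (lam ^ 2) ^ (k - s) := by
      intro s hs
      obtain ⟨hs1, hs2⟩ := Finset.mem_Ico.1 hs
      have h1 : lam ^ (k + 1 - s) ≤ lam ^ (k - s) :=
        pow_le_pow_of_le_one hlam0.le hlam1.le (by omega)
      have h2 : (0:ℝ) ≤ lam ^ (k + 1 - s) := by positivity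
      calc (lam ^ (k + 1 - s) + lam ^ (k - s)) ^ 2 ≤ (2 * lam ^ (k - s)) ^ 2 := by
            refine pow_le_pow_left₀ (by positivity) (by linarith) 2
        _ = 4 * (lam ^ 2) ^ (k - s) := by
            rw [mul_pow, ← pow_mul, ← pow_mul, Nat.mul_comm]
            norm_num
    refine (Finset.sum_le_sum hstep1).trans ?_
    rw [← Finset.mul_sum]
    refine mul_le_mul_of_nonneg_left ?_ (by norm_num)
    rw [Finset.sum_Ico_eq_sum_range]
    have hre2 : ∑ j ∈ Finset.range (k - 1), (lam ^ 2) ^ (k - (1 + j))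
        = ∑ j ∈ Finset.range (k - 1), (lam ^ 2) ^ (j + 1) := by
      rw [← Finset.sum_range_reflect (fun j => (lam ^ 2) ^ (j + 1)) (k - 1)]
      refine Finset.sum_congr rfl fun j hj => ?_
      have hj' := Finset.mem_range.1 hj
      congr 1
      omega
    rw [hre2]
    have hmul : ∑ j ∈ Finset.range (k - 1), (lam ^ 2) ^ (j + 1)
        = lam ^ 2 * ∑ j ∈ Finset.range (k - 1), (lam ^ 2) ^ j := by
      rw [Finset.mul_sum]
      exact Finset.sum_congr rfl fun j _ => by rw [pow_succ']
    rw [hmul]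
    have hpos1 : (0:ℝ) < 1 - lam ^ 2 := by linarith
    have hgs : ∑ j ∈ Finset.range (k - 1), (lam ^ 2) ^ j ≤ 1 / (1 - lam ^ 2) := by
      rw [geom_sum_eq (ne_of_lt hr1)]
      rw [show ((lam ^ 2) ^ (k - 1) - 1) / (lam ^ 2 - 1)
          = (1 - (lam ^ 2) ^ (k - 1)) / (1 - lam ^ 2) from by rw [← neg_div_neg_eq]; ring_nf]
      rw [div_le_div_iff₀ hpos1 hpos1]
      nlinarith [pow_nonneg hr0 (k - 1)]
    calc lam ^ 2 * ∑ j ∈ Finset.range (k - 1), (lam ^ 2) ^ j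
        ≤ lam ^ 2 * (1 / (1 - lam ^ 2)) := mul_le_mul_of_nonneg_left hgs hr0
      _ = lam ^ 2 / (1 - lam ^ 2) := by ring
  -- final assembly
  have hfin : ∑ s ∈ Finset.Icc 1 k, ∫ ω, ‖v s ω‖ ^ 2 ∂μ
      ≤ 4 * (lam ^ 2 / (1 - lam ^ 2)) * ((n:ℝ) * (G + G₀) ^ 2) + (n:ℝ) * σ₀ ^ 2 := by
    rw [← Finset.Ico_add_one_right_eq_Icc, Finset.sum_Ico_succ_top hk1]
    refine add_le_add ?_ hBk
    calc ∑ s ∈ Finset.Ico 1 k, ∫ ω, ‖v s ω‖ ^ 2 ∂μ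
        ≤ ∑ s ∈ Finset.Ico 1 k,
            (lam ^ (k + 1 - s) + lam ^ (k - s)) ^ 2 * ((n:ℝ) * (G + G₀) ^ 2) :=
          Finset.sum_le_sum hBs
      _ = (∑ s ∈ Finset.Ico 1 k, (lam ^ (k + 1 - s) + lam ^ (k - s)) ^ 2)
            * ((n:ℝ) * (G + G₀) ^ 2) := (Finset.sum_mul _ _ _).symm
      _ ≤ 4 * (lam ^ 2 / (1 - lam ^ 2)) * ((n:ℝ) * (G + G₀) ^ 2) :=
          mul_le_mul_of_nonneg_right hgeo (by positivity)
  rw [key]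
  refine hfin.trans ?_
  have h1lam : (0:ℝ) < 1 - lam := by linarith
  have h1lam2 : (0:ℝ) < 1 - lam ^ 2 := by nlinarith
  have hquot : ((G + G₀) / (1 / lam - 1)) ^ 2 = (G + G₀) ^ 2 * (lam ^ 2 / (1 - lam) ^ 2) := by
    have hll : 1 / lam - 1 = (1 - lam) / lam := by field_simp
    rw [hll]
    field_simp
  rw [hquot]
  have hkey1 : lam ^ 2 / (1 - lam ^ 2) ≤ lam ^ 2 / (1 - lam) ^ 2 := by
    rw [div_le_div_iff₀ h1lam2 (by positivity)]
    nlinarith [mul_nonneg (mul_nonneg (sq_nonneg lam) hlam0.le)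
      (by linarith : (0:ℝ) ≤ 1 - lam)]
  have t1 : 4 * (lam ^ 2 / (1 - lam ^ 2)) * ((n:ℝ) * (G + G₀) ^ 2)
      ≤ 4 * (lam ^ 2 / (1 - lam) ^ 2) * ((n:ℝ) * (G + G₀) ^ 2) := by
    refine mul_le_mul_of_nonneg_right ?_ (by positivity)
    linarith
  have hn1 : (1:ℝ) ≤ (n:ℝ) := by exact_mod_cast hn
  have hnn : (0:ℝ) ≤ (n:ℝ) * σ₀ ^ 2 := by positivity
  have t2 : (n:ℝ) * σ₀ ^ 2 ≤ 8 * ((n:ℝ) * σ₀ ^ 2) := by linarith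
  have hexp : 4 * (n:ℝ) * ((G + G₀) ^ 2 * (lam ^ 2 / (1 - lam) ^ 2) + 2 * σ₀ ^ 2)
      = 4 * (lam ^ 2 / (1 - lam) ^ 2) * ((n:ℝ) * (G + G₀) ^ 2) + 8 * ((n:ℝ) * σ₀ ^ 2) := by
    ring
  rw [hexp]
  linarith
end

section
/- Let n ≥ 1, G > 0, let K ≥ 2 be an even integer, let k₀ ≥ 1 be an integer, and let λ ∈ [0,1) satisfy λ ≤ (k₀/(k₀+1))². Let e_1, …, e_K be nonnegative reals with e_1 ≤ λ√n·G and e_k ≤ λ·(e_{k−1} + 2√n·G/(K−k+1)) for every 2 ≤ k ≤ K. Set N₀ = k₀·√n·G·max{λ(1 + 2/(1−λ)), 2}. Then e_k ≤ N₀/k for every 1 ≤ k ≤ K/2 + 1, and e_k ≤ N₀/(K−k+1) for every K/2 + 1 ≤ k ≤ K. -/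
set_option maxHeartbeats 1000000


/-- Consensus-error recursion: if `e₁ ≤ λ√n G` and
`eₖ ≤ λ(eₖ₋₁ + 2√n G/(K−k+1))` for `2 ≤ k ≤ K`, where `0 ≤ λ < 1`,
`λ ≤ (k₀/(k₀+1))²`, and `K ≥ 2` is even, then with
`N₀ = k₀ √n G max{λ(1 + 2/(1−λ)), 2}` one has `eₖ ≤ N₀/k` for `1 ≤ k ≤ K/2 + 1`
and `eₖ ≤ N₀/(K−k+1)` for `K/2 + 1 ≤ k ≤ K`. -/
theorem stmt_7 (n : ℕ) (hn : 1 ≤ n) (G : ℝ) (hG : 0 < G) (K : ℕ) (hK : 2 ≤ K)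
    (hKeven : Even K) (k₀ : ℕ) (hk₀ : 1 ≤ k₀)
    (lam : ℝ) (hlam0 : 0 ≤ lam) (hlam1 : lam < 1)
    (hlam : lam ≤ ((k₀ : ℝ) / ((k₀ : ℝ) + 1)) ^ 2)
    (e : ℕ → ℝ) (he0 : ∀ k, 1 ≤ k → k ≤ K → 0 ≤ e k)
    (he1 : e 1 ≤ lam * Real.sqrt n * G)
    (hrec : ∀ k, 2 ≤ k → k ≤ K →
      e k ≤ lam * (e (k - 1) + 2 * Real.sqrt n * G / ((K : ℝ) - (k : ℝ) + 1))) :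
    (∀ k, 1 ≤ k → k ≤ K / 2 + 1 →
      e k ≤ (k₀ : ℝ) * Real.sqrt n * G * max (lam * (1 + 2 / (1 - lam))) 2 / (k : ℝ)) ∧
    (∀ k, K / 2 + 1 ≤ k → k ≤ K →
      e k ≤ (k₀ : ℝ) * Real.sqrt n * G * max (lam * (1 + 2 / (1 - lam))) 2 /
        ((K : ℝ) - (k : ℝ) + 1)) := by
  have hn1 : (1:ℝ) ≤ (n:ℝ) := by exact_mod_cast hn
  have hS1 : (1:ℝ) ≤ Real.sqrt n := by
    rw [show (1:ℝ) = Real.sqrt 1 by simp]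
    exact Real.sqrt_le_sqrt hn1
  set S := Real.sqrt n with hSdef
  have hS0 : (0:ℝ) < S := by linarith
  set M := max (lam * (1 + 2 / (1 - lam))) 2 with hMdef
  have hM2 : (2:ℝ) ≤ M := le_max_right _ _
  have hM0 : (0:ℝ) < M := by linarith
  have hBM : lam * (1 + 2 / (1 - lam)) ≤ M := le_max_left _ _
  have h1l : (0:ℝ) < 1 - lam := by linarith
  have hSG : (0:ℝ) < S * G := mul_pos hS0 hG
  have hk₀R : (1:ℝ) ≤ (k₀:ℝ) := by exact_mod_cast hk₀
  have hk₀p : (0:ℝ) < (k₀:ℝ) + 1 := by linarith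
  set N := (k₀:ℝ) * S * G * M with hNdef
  clear_value S M N
  have hN2 : 2 * (k₀:ℝ) * (S * G) ≤ N := by
    rw [hNdef]
    linarith [mul_nonneg (mul_nonneg (by linarith : (0:ℝ) ≤ (k₀:ℝ)) hSG.le)
      (by linarith : (0:ℝ) ≤ M - 2)]
  have hN0 : (0:ℝ) < N := by
    rw [hNdef]
    have : (0:ℝ) < (k₀:ℝ) := by linarith
    positivity
  have hB' : lam * (1 - lam) + 2 * lam ≤ M * (1 - lam) := by
    have h := mul_le_mul_of_nonneg_right hBM h1l.le
    have heq : lam * (1 + 2 / (1 - lam)) * (1 - lam) = lam * (1 - lam) + 2 * lam := by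
      field_simp
    rw [heq] at h; exact h
  have hkey : lam * (M + 2) ≤ M := by linarith [hB', mul_nonneg hlam0 h1l.le]
  have hlt : lam * ((k₀:ℝ) + 1) ^ 2 ≤ (k₀:ℝ) ^ 2 := by
    have h := mul_le_mul_of_nonneg_right hlam
      (le_of_lt (by positivity : (0:ℝ) < ((k₀:ℝ) + 1) ^ 2))
    calc lam * ((k₀:ℝ) + 1) ^ 2 ≤ ((k₀:ℝ) / ((k₀:ℝ) + 1)) ^ 2 * ((k₀:ℝ) + 1) ^ 2 := h
      _ = (k₀:ℝ) ^ 2 := by field_simp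
  have hq : lam * (N + 2 * S * G) ≤ (k₀:ℝ) / ((k₀:ℝ) + 1) * N := by
    have hpos : (0:ℝ) ≤ N + 2 * S * G := by linarith [hN0, hSG]
    have h1 : lam * (N + 2 * S * G) * ((k₀:ℝ) + 1) ^ 2 ≤ (k₀:ℝ) ^ 2 * (N + 2 * S * G) := by
      linarith [mul_nonneg (by linarith : (0:ℝ) ≤ (k₀:ℝ) ^ 2 - lam * ((k₀:ℝ) + 1) ^ 2) hpos]
    have h2 : (k₀:ℝ) ^ 2 * (N + 2 * S * G) ≤ (k₀:ℝ) * ((k₀:ℝ) + 1) * N := by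
      linarith [mul_nonneg (by linarith : (0:ℝ) ≤ (k₀:ℝ))
        (by linarith : (0:ℝ) ≤ N - 2 * (k₀:ℝ) * (S * G))]
    rw [div_mul_eq_mul_div, le_div_iff₀ hk₀p]
    exact le_of_mul_le_mul_right (by linarith [h1, h2]) hk₀p
  have hqN : lam * (N + 2 * S * G) ≤ N := by
    refine hq.trans ?_
    rw [div_mul_eq_mul_div, div_le_iff₀ hk₀p]
    linarith [hN0]
  -- uniform bound e k ≤ S*G*M for all 1 ≤ k ≤ K
  have hunif : ∀ k, 1 ≤ k → k ≤ K → e k ≤ S * G * M := by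
    intro k
    induction k with
    | zero => omega
    | succ m ih =>
      intro _ hkK
      by_cases hm : m = 0
      · subst hm
        calc e 1 ≤ lam * S * G := he1
          _ ≤ S * G * M := by linarith [mul_nonneg hSG.le (by linarith : (0:ℝ) ≤ M - lam)]
      · have hm1 : 1 ≤ m := Nat.one_le_iff_ne_zero.mpr hm
        have hkKR : ((m:ℝ) + 1) ≤ (K:ℝ) := by exact_mod_cast hkK
        have hrec' := hrec (m + 1) (by omega) hkK
        simp only [Nat.add_sub_cancel] at hrec'
        push_cast at hrec'
        have hem := ih hm1 (by omega)
        have hfrac : 2 * S * G / ((K:ℝ) - ((m:ℝ) + 1) + 1) ≤ 2 * S * G := by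
          rw [div_le_iff₀ (by linarith)]
          linarith [mul_nonneg hSG.le (by linarith : (0:ℝ) ≤ (K:ℝ) - ((m:ℝ) + 1) + 1 - 1)]
        calc e (m + 1) ≤ lam * (e m + 2 * S * G / ((K:ℝ) - ((m:ℝ) + 1) + 1)) := hrec'
          _ ≤ lam * (S * G * M + 2 * S * G) := by
              apply mul_le_mul_of_nonneg_left (by linarith) hlam0
          _ ≤ S * G * M := by linarith [mul_le_mul_of_nonneg_right hkey hSG.le]
  have hK2 : K / 2 + 1 ≤ K := by omega
  have part1 : ∀ k, 1 ≤ k → k ≤ K / 2 + 1 → e k ≤ N / (k:ℝ) := by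
    intro k
    induction k with
    | zero => omega
    | succ m ih =>
      intro _ hk2
      by_cases hsmall : m + 1 ≤ k₀
      · have h1 := hunif (m + 1) (by omega) (by omega)
        have hcpos : (0:ℝ) < ((m:ℝ) + 1) := by positivity
        have hc : ((m:ℝ) + 1) ≤ (k₀:ℝ) := by exact_mod_cast hsmall
        rw [le_div_iff₀ (by push_cast; exact hcpos)]
        push_cast
        calc e (m + 1) * ((m:ℝ) + 1) ≤ (S * G * M) * (k₀:ℝ) := by
              apply mul_le_mul h1 hc hcpos.le (by positivity)
          _ = N := by rw [hNdef]; ring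
      · have hm1 : 1 ≤ m := by omega
        have ihm := ih (by omega) (by omega)
        have hrec' := hrec (m + 1) (by omega) (by omega)
        simp only [Nat.add_sub_cancel] at hrec'
        push_cast at hrec' ⊢
        have hmR : (1:ℝ) ≤ (m:ℝ) := by exact_mod_cast hm1
        have hm0 : (0:ℝ) < (m:ℝ) := by linarith
        have hcm : (k₀:ℝ) + 1 ≤ (m:ℝ) + 1 := by
          have : k₀ + 1 ≤ m + 1 := by omega
          exact_mod_cast this
        have hd : (m:ℝ) ≤ (K:ℝ) - ((m:ℝ) + 1) + 1 := by
          have h2m : 2 * m ≤ K := by omega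
          have h2mR : ((2 * m : ℕ) : ℝ) ≤ (K:ℝ) := by exact_mod_cast h2m
          push_cast at h2mR; linarith
        have hd0 : (0:ℝ) < (K:ℝ) - ((m:ℝ) + 1) + 1 := by linarith
        have hfrac : 2 * S * G / ((K:ℝ) - ((m:ℝ) + 1) + 1) ≤ 2 * S * G / (m:ℝ) :=
          div_le_div_of_nonneg_left (by linarith [hSG]) hm0 hd
        have hnum : lam * (N + 2 * S * G) ≤ ((m:ℝ) / ((m:ℝ) + 1)) * N := by
          refine hq.trans ?_
          apply mul_le_mul_of_nonneg_right _ hN0.le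
          rw [div_le_div_iff₀ hk₀p (by linarith)]
          nlinarith [hcm]
        calc e (m + 1) ≤ lam * (e m + 2 * S * G / ((K:ℝ) - ((m:ℝ) + 1) + 1)) := hrec'
          _ ≤ lam * (N / (m:ℝ) + 2 * S * G / (m:ℝ)) := by
              apply mul_le_mul_of_nonneg_left (by linarith) hlam0
          _ = lam * (N + 2 * S * G) / (m:ℝ) := by field_simp
          _ ≤ ((m:ℝ) / ((m:ℝ) + 1)) * N / (m:ℝ) := by
              exact div_le_div_of_nonneg_right hnum hm0.le
          _ = N / ((m:ℝ) + 1) := by field_simp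
  have hKhalf : ((K / 2 : ℕ) : ℝ) = (K:ℝ) / 2 := by
    obtain ⟨j, hj⟩ := hKeven
    subst hj
    have hjj : (j + j) / 2 = j := by omega
    rw [hjj]; push_cast; ring
  have part2 : ∀ k, K / 2 + 1 ≤ k → k ≤ K → e k ≤ N / ((K:ℝ) - (k:ℝ) + 1) := by
    intro k hk
    induction k, hk using Nat.le_induction with
    | base =>
      intro _
      have h1 := part1 (K / 2 + 1) (by omega) (le_refl _)
      have hKR : (2:ℝ) ≤ (K:ℝ) := by exact_mod_cast hK
      have hpos : (0:ℝ) < (K:ℝ) / 2 := by linarith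
      have hden : (K:ℝ) - ((K / 2 + 1 : ℕ) : ℝ) + 1 = (K:ℝ) / 2 := by
        push_cast [hKhalf]; ring
      rw [hden]
      refine h1.trans ?_
      apply div_le_div_of_nonneg_left hN0.le hpos
      push_cast [hKhalf]; linarith
    | succ m hm ih =>
      intro hkK
      have hrec' := hrec (m + 1) (by omega) hkK
      simp only [Nat.add_sub_cancel] at hrec'
      push_cast at hrec' ⊢
      have ihm := ih (by omega)
      have hkKR : ((m:ℝ) + 1) ≤ (K:ℝ) := by exact_mod_cast hkK
      have hd1 : (1:ℝ) ≤ (K:ℝ) - ((m:ℝ) + 1) + 1 := by linarith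
      have hd0 : (0:ℝ) < (K:ℝ) - ((m:ℝ) + 1) + 1 := by linarith
      have hprev : (K:ℝ) - (m:ℝ) + 1 = ((K:ℝ) - ((m:ℝ) + 1) + 1) + 1 := by ring
      rw [hprev] at ihm
      set d : ℝ := (K:ℝ) - ((m:ℝ) + 1) + 1 with hdd
      have hNd : N / (d + 1) ≤ N / d := div_le_div_of_nonneg_left hN0.le hd0 (by linarith)
      calc e (m + 1) ≤ lam * (e m + 2 * S * G / d) := hrec'
        _ ≤ lam * (N / d + 2 * S * G / d) := by
            apply mul_le_mul_of_nonneg_left (by linarith) hlam0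
        _ = lam * (N + 2 * S * G) / d := by
            rw [mul_add, ← mul_div_assoc, ← mul_div_assoc, ← add_div, mul_add]
        _ ≤ N / d := div_le_div_of_nonneg_right hqN hd0.le
  exact ⟨part1, part2⟩
end

section
/- Let M > 0 and let a_1, a_2, … be nonnegative real numbers satisfying a_1 ≤ M/5^{2/3} and, for every k ≥ 2, a_k ≤ M/(k+3)^{4/3} + (1 − 2/(k+3)^{2/3})·a_{k−1}. Then a_k ≤ M/(k+4)^{2/3} for every k ≥ 1. -/
open Real

lemma key_ineq (x : ℝ) (hx : 5 ≤ x) :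
    ((x + 1) ^ ((2:ℝ)/3)) * (x ^ ((2:ℝ)/3) - 1) ≤ (x ^ ((2:ℝ)/3)) ^ 2 := by
  have hx0 : (0:ℝ) < x := by linarith
  set t := x ^ ((2:ℝ)/3) with ht
  have ht1 : (1:ℝ) ≤ t := Real.one_le_rpow (by linarith) (by norm_num)
  have htx : t ≤ x := by
    calc t ≤ x ^ (1:ℝ) := Real.rpow_le_rpow_of_exponent_le (by linarith) (by norm_num)
    _ = x := Real.rpow_one x
  -- Bernoulli bound on (x+1)^(2/3)
  have hb : (x + 1) ^ ((2:ℝ)/3) ≤ t * (1 + (2/3) * (1/x)) := by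
    have hxx : x + 1 = x * (1 + 1/x) := by field_simp
    rw [hxx, Real.mul_rpow (le_of_lt hx0) (by positivity)]
    gcongr
    have := rpow_one_add_le_one_add_mul_self (s := 1/x) (le_trans (by norm_num : (-1:ℝ) ≤ 0) (by positivity))
      (p := (2:ℝ)/3) (by norm_num) (by norm_num)
    linarith
  have ht0 : (0:ℝ) < t := by linarith
  have h1x : (0:ℝ) < 1/x := by positivity
  have h2' : (t - 1) / x ≤ 1 := (div_le_one hx0).mpr (by linarith)
  have hA := mul_le_mul_of_nonneg_right hb (by linarith : (0:ℝ) ≤ t - 1)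
  have hB := mul_le_mul_of_nonneg_left h2' (le_of_lt ht0)
  have hC : t * (1 + 2 / 3 * (1 / x)) * (t - 1)
      = t * (t - 1) + (2/3) * (t * ((t - 1) / x)) := by field_simp
  nlinarith [hA, hB, hC, ht0]

/-- Variance-reduction recursion (first half of a block): if `a₁ ≤ M/5^{2/3}` and
`aₖ ≤ M/(k+3)^{4/3} + (1 − 2/(k+3)^{2/3}) aₖ₋₁` for `k ≥ 2`, with `M > 0` and all
`aₖ ≥ 0`, then `aₖ ≤ M/(k+4)^{2/3}` for every `k ≥ 1`. -/
theorem stmt_8 (M : ℝ) (hM : 0 < M) (a : ℕ → ℝ) (ha : ∀ k, 1 ≤ k → 0 ≤ a k)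
    (h1 : a 1 ≤ M / (5 : ℝ) ^ ((2 : ℝ) / 3))
    (hrec : ∀ k, 2 ≤ k →
      a k ≤ M / ((k : ℝ) + 3) ^ ((4 : ℝ) / 3)
        + (1 - 2 / ((k : ℝ) + 3) ^ ((2 : ℝ) / 3)) * a (k - 1)) :
    ∀ k, 1 ≤ k → a k ≤ M / ((k : ℝ) + 4) ^ ((2 : ℝ) / 3) := by
  intro k hk
  induction k, hk using Nat.le_induction with
  | base => norm_num; exact h1
  | succ k hk ih =>
    set x : ℝ := (k : ℝ) + 4 with hxdef
    have hx5 : (5:ℝ) ≤ x := by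
      have : (1:ℝ) ≤ (k:ℝ) := by exact_mod_cast hk
      linarith
    have hx0 : (0:ℝ) < x := by linarith
    set t := x ^ ((2:ℝ)/3) with ht
    have ht0 : (0:ℝ) < t := Real.rpow_pos_of_pos hx0 _
    have ht2 : (2:ℝ) ≤ t := by
      have h5 : (2:ℝ) ≤ (5:ℝ) ^ ((2:ℝ)/3) := by
        have : ((2:ℝ) ^ ((3:ℝ)/2)) ^ ((2:ℝ)/3) ≤ (5:ℝ) ^ ((2:ℝ)/3) := by
          apply Real.rpow_le_rpow (by positivity) ?_ (by norm_num)
          calc (2:ℝ) ^ ((3:ℝ)/2) ≤ 2 ^ (2:ℝ) := by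
                apply Real.rpow_le_rpow_of_exponent_le (by norm_num) (by norm_num)
          _ = 4 := by norm_num [Real.rpow_natCast]
          _ ≤ 5 := by norm_num
        rwa [← Real.rpow_mul (by norm_num), show (3:ℝ)/2 * (2/3) = 1 by norm_num,
          Real.rpow_one] at this
      calc (2:ℝ) ≤ (5:ℝ) ^ ((2:ℝ)/3) := h5
      _ ≤ t := Real.rpow_le_rpow (by norm_num) hx5 (by norm_num)
    -- apply recursion at k+1
    have hr := hrec (k + 1) (by omega)
    simp only [Nat.add_sub_cancel] at hr
    have hcast : (k:ℝ) + 1 + 3 = x := by rw [hxdef]; ring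
    push_cast at hr
    rw [hcast] at hr
    have ht4 : x ^ ((4:ℝ)/3) = t ^ 2 := by
      rw [ht, ← Real.rpow_natCast (x ^ ((2:ℝ)/3)) 2, ← Real.rpow_mul (le_of_lt hx0)]
      norm_num
    rw [ht4, ← ht] at hr
    -- bound the second term
    have hfac : (0:ℝ) ≤ 1 - 2 / t := by
      rw [sub_nonneg, div_le_one ht0]; exact ht2
    have hstep : a (k + 1) ≤ M / t ^ 2 + (1 - 2 / t) * (M / t) := by
      calc a (k + 1) ≤ M / t ^ 2 + (1 - 2 / t) * a k := hr
      _ ≤ M / t ^ 2 + (1 - 2 / t) * (M / t) := by gcongr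
    -- algebraic bound: M/t² + (1-2/t)(M/t) = M(t-1)/t²
    have halg : M / t ^ 2 + (1 - 2 / t) * (M / t) = M * (t - 1) / t ^ 2 := by
      field_simp; ring
    rw [halg] at hstep
    -- key inequality
    have hs0 : (0:ℝ) < (x + 1) ^ ((2:ℝ)/3) := Real.rpow_pos_of_pos (by linarith) _
    have hkey := key_ineq x hx5
    have hfinal : M * (t - 1) / t ^ 2 ≤ M / (x + 1) ^ ((2:ℝ)/3) := by
      rw [div_le_div_iff₀ (by positivity) hs0]
      calc M * (t - 1) * (x + 1) ^ ((2:ℝ)/3)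
          = M * ((x + 1) ^ ((2:ℝ)/3) * (t - 1)) := by ring
        _ ≤ M * (t ^ 2) := by
            apply mul_le_mul_of_nonneg_left hkey (le_of_lt hM)
        _ = M * t ^ 2 := by ring
    have hcast2 : (k:ℝ) + 1 + 4 = x + 1 := by rw [hxdef]; ring
    push_cast
    rw [hcast2]
    linarith
end

section
/- Let M > 0, let K ≥ 1 and 1 ≤ k₁ ≤ K be integers, and let a_{k₁}, …, a_K be nonnegative real numbers satisfying a_{k₁} ≤ M/(K−k₁+1)^{2/3} and, for every k with k₁ < k ≤ K, a_k ≤ M/(K−k+2)^{4/3} + (1 − (3/2)/(K−k+2)^{2/3})·a_{k−1}. Then a_k ≤ M/(K−k+1)^{2/3} for every k₁ ≤ k ≤ K. -/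
lemma key_step (M t ak : ℝ) (hM : 0 < M) (ht : 1 ≤ t) (hak : 0 ≤ ak)
    (h : ak ≤ M / (t + 1) ^ ((2 : ℝ) / 3)) :
    M / (t + 1) ^ ((4 : ℝ) / 3) + (1 - (3 / 2) / (t + 1) ^ ((2 : ℝ) / 3)) * ak
      ≤ M / t ^ ((2 : ℝ) / 3) := by
  have ht0 : (0 : ℝ) < t := lt_of_lt_of_le one_pos ht
  have hx : (1 : ℝ) ≤ t + 1 := by linarith
  have hx0 : (0 : ℝ) < t + 1 := by linarith
  set p2 := (t + 1) ^ ((2 : ℝ) / 3) with hp2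
  set p4 := (t + 1) ^ ((4 : ℝ) / 3) with hp4
  have hp2pos : 0 < p2 := Real.rpow_pos_of_pos hx0 _
  have hp4pos : 0 < p4 := Real.rpow_pos_of_pos hx0 _
  have hmul : p2 * p2 = p4 := by
    rw [hp2, hp4, ← Real.rpow_add hx0]; norm_num
  have ht2pos : 0 < t ^ ((2 : ℝ) / 3) := Real.rpow_pos_of_pos ht0 _
  have hle : t ^ ((2 : ℝ) / 3) ≤ p2 :=
    Real.rpow_le_rpow (le_of_lt ht0) (by linarith) (by norm_num)
  have hfin : M / p2 ≤ M / t ^ ((2 : ℝ) / 3) :=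
    div_le_div_of_nonneg_left (le_of_lt hM) ht2pos hle
  rcases le_or_gt (1 - (3 / 2) / p2) 0 with hc | hc
  · have h1 : (1 - (3 / 2) / p2) * ak ≤ 0 := mul_nonpos_of_nonpos_of_nonneg hc hak
    have h24 : p2 ≤ p4 :=
      Real.rpow_le_rpow_of_exponent_le hx (by norm_num)
    have : M / p4 ≤ M / p2 := div_le_div_of_nonneg_left (le_of_lt hM) hp2pos h24
    linarith
  · have h1 : (1 - (3 / 2) / p2) * ak ≤ (1 - (3 / 2) / p2) * (M / p2) :=
      mul_le_mul_of_nonneg_left h (le_of_lt hc)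
    have h2 : M / p4 + (1 - (3 / 2) / p2) * (M / p2) ≤ M / p2 := by
      have key : (1 - (3 / 2) / p2) * (M / p2) = M / p2 - (3 / 2) * (M / p4) := by
        rw [← hmul]
        field_simp
      have : 0 ≤ M / p4 := le_of_lt (div_pos hM hp4pos)
      rw [key]; linarith
    linarith

/-- Variance-reduction recursion (second half of a block): if
`a_{k₁} ≤ M/(K−k₁+1)^{2/3}` and
`aₖ ≤ M/(K−k+2)^{4/3} + (1 − (3/2)/(K−k+2)^{2/3}) aₖ₋₁` for `k₁ < k ≤ K`,
with `M > 0` and all `aₖ ≥ 0`, then `aₖ ≤ M/(K−k+1)^{2/3}` for every `k₁ ≤ k ≤ K`. -/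
theorem stmt_9 (M : ℝ) (hM : 0 < M) (K k₁ : ℕ) (hK : 1 ≤ K) (hk₁ : 1 ≤ k₁)
    (hk₁K : k₁ ≤ K)
    (a : ℕ → ℝ) (ha : ∀ k, k₁ ≤ k → k ≤ K → 0 ≤ a k)
    (hbase : a k₁ ≤ M / ((K : ℝ) - (k₁ : ℝ) + 1) ^ ((2 : ℝ) / 3))
    (hrec : ∀ k, k₁ < k → k ≤ K →
      a k ≤ M / ((K : ℝ) - (k : ℝ) + 2) ^ ((4 : ℝ) / 3)
        + (1 - (3 / 2) / ((K : ℝ) - (k : ℝ) + 2) ^ ((2 : ℝ) / 3)) * a (k - 1)) :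
    ∀ k, k₁ ≤ k → k ≤ K → a k ≤ M / ((K : ℝ) - (k : ℝ) + 1) ^ ((2 : ℝ) / 3) := by
  intro k hk
  induction k, hk using Nat.le_induction with
  | base => intro _; exact hbase
  | succ k hk ih =>
    intro hkK
    have hkK' : k ≤ K := le_trans (Nat.le_succ k) hkK
    have IH := ih hkK'
    have hak : 0 ≤ a k := ha k hk hkK'
    have hrec' := hrec (k + 1) (Nat.lt_succ_of_le hk) hkK
    simp only [Nat.add_sub_cancel] at hrec'
    set t : ℝ := (K : ℝ) - (k : ℝ) with hts
    have ht : 1 ≤ t := by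
      have : (k : ℝ) + 1 ≤ (K : ℝ) := by exact_mod_cast hkK
      simp [hts]; linarith
    have he1 : (K : ℝ) - ((k : ℕ) + 1 : ℕ) + 2 = t + 1 := by push_cast; ring
    have he2 : (K : ℝ) - ((k : ℕ) + 1 : ℕ) + 1 = t := by push_cast; ring
    have hIH' : a k ≤ M / (t + 1) ^ ((2 : ℝ) / 3) := by
      have : (K : ℝ) - (k : ℝ) + 1 = t + 1 := by ring
      rwa [this] at IH
    rw [he1] at hrec'
    rw [he2]
    calc a (k + 1) ≤ _ := hrec'
      _ ≤ M / t ^ ((2 : ℝ) / 3) := key_step M t (a k) hM ht hak hIH'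
end

section
/- For every real number x ≥ 1: (x^{2/3} − 1)·(x+1)^{2/3} ≤ x^{4/3}. Equivalently, (x^{2/3} − 1)/x^{4/3} ≤ 1/(x+1)^{2/3}. -/
lemma aux_sub (x y p : ℝ) (hx : 0 ≤ x) (hy : 0 ≤ y) (hp : 0 ≤ p) (hp1 : p ≤ 1) :
    (x + y) ^ p ≤ x ^ p + y ^ p := by
  lift x to NNReal using hx
  lift y to NNReal using hy
  have := NNReal.rpow_add_le_add_rpow x y hp hp1
  exact_mod_cast this

/-- For every real `x ≥ 1`, `(x^{2/3} − 1)(x+1)^{2/3} ≤ x^{4/3}`; equivalently,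
`(x^{2/3} − 1)/x^{4/3} ≤ 1/(x+1)^{2/3}`. -/
theorem stmt_10 (x : ℝ) (hx : 1 ≤ x) :
    (x ^ ((2 : ℝ) / 3) - 1) * (x + 1) ^ ((2 : ℝ) / 3) ≤ x ^ ((4 : ℝ) / 3) ∧
    (x ^ ((2 : ℝ) / 3) - 1) / x ^ ((4 : ℝ) / 3) ≤ 1 / (x + 1) ^ ((2 : ℝ) / 3) := by
  have hx0 : (0 : ℝ) ≤ x := by linarith
  have h23 : (1 : ℝ) ≤ x ^ ((2:ℝ)/3) := by
    calc (1:ℝ) = 1 ^ ((2:ℝ)/3) := (Real.one_rpow _).symm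
    _ ≤ x ^ ((2:ℝ)/3) := Real.rpow_le_rpow (by norm_num) hx (by norm_num)
  have hsub : (x + 1) ^ ((2:ℝ)/3) ≤ x ^ ((2:ℝ)/3) + 1 := by
    have := aux_sub x 1 ((2:ℝ)/3) hx0 (by norm_num) (by norm_num) (by norm_num)
    simpa using this
  have hsq : x ^ ((2:ℝ)/3) * x ^ ((2:ℝ)/3) = x ^ ((4:ℝ)/3) := by
    rw [← Real.rpow_add' hx0 (by norm_num)]; norm_num
  have h1 : (x ^ ((2 : ℝ) / 3) - 1) * (x + 1) ^ ((2 : ℝ) / 3) ≤ x ^ ((4 : ℝ) / 3) := by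
    calc (x ^ ((2 : ℝ) / 3) - 1) * (x + 1) ^ ((2 : ℝ) / 3)
        ≤ (x ^ ((2 : ℝ) / 3) - 1) * (x ^ ((2:ℝ)/3) + 1) :=
          mul_le_mul_of_nonneg_left hsub (by linarith)
      _ = x ^ ((2:ℝ)/3) * x ^ ((2:ℝ)/3) - 1 := by ring
      _ ≤ x ^ ((4 : ℝ) / 3) := by rw [hsq]; linarith
  refine ⟨h1, ?_⟩
  have hx43 : (0:ℝ) < x ^ ((4:ℝ)/3) := Real.rpow_pos_of_pos (by linarith) _
  have hx1 : (0:ℝ) < (x+1) ^ ((2:ℝ)/3) := Real.rpow_pos_of_pos (by linarith) _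
  rw [div_le_div_iff₀ hx43 hx1]
  linarith [h1]
end

section
/- Let F : ℝ^p → ℝ be differentiable, and suppose that for all x, y ∈ [0,1]^p with x ≤ y componentwise one has F(x) ≤ F(y) (monotonicity) and ∇F(y) ≤ ∇F(x) componentwise (the DR property). Then for all x, x* ∈ [0,1]^p: F(x*) − F(x) ≤ ⟨∇F(x), x*⟩. -/
open Set Filter Topology

lemma my_deriv_nonneg {f : ℝ → ℝ} {a : ℝ} (hf : DifferentiableAt ℝ f a)
    (hm : MonotoneOn f (Set.Icc 0 1)) (ha : a ∈ Set.Icc (0:ℝ) 1) : 0 ≤ deriv f a := by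
  have H := hf.hasDerivAt
  rw [hasDerivAt_iff_tendsto_slope] at H
  rcases lt_or_ge a 1 with h1 | h1
  · have H' : Tendsto (slope f a) (𝓝[>] a) (𝓝 (deriv f a)) :=
      H.mono_left (nhdsWithin_mono _ (fun t ht => ne_of_gt ht))
    refine ge_of_tendsto H' ?_
    filter_upwards [Ioc_mem_nhdsGT_of_mem ⟨le_refl a, h1⟩] with t ht
    have h2 : f a ≤ f t := hm ha ⟨le_trans ha.1 ht.1.le, ht.2⟩ ht.1.le
    rw [slope_def_field]
    exact div_nonneg (by linarith) (by linarith [ht.1])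
  · have h0 : 0 < a := lt_of_lt_of_le one_pos h1
    have H' : Tendsto (slope f a) (𝓝[<] a) (𝓝 (deriv f a)) :=
      H.mono_left (nhdsWithin_mono _ (fun t ht => ne_of_lt ht))
    refine ge_of_tendsto H' ?_
    filter_upwards [Ico_mem_nhdsLT_of_mem ⟨h0, le_refl a⟩] with t ht
    have h2 : f t ≤ f a := hm ⟨ht.1, le_trans ht.2.le ha.2⟩ ha ht.2.le
    rw [slope_def_field]
    exact div_nonneg_of_nonpos (by linarith) (by linarith [ht.2])

section main
variable {p : ℕ} {F : EuclideanSpace ℝ (Fin p) → ℝ}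

lemma my_fderiv_eq_inner (hdiff : Differentiable ℝ F) (x v : EuclideanSpace ℝ (Fin p)) :
    fderiv ℝ F x v = (inner ℝ (gradient F x) v : ℝ) := by
  have h : HasFDerivAt F (InnerProductSpace.toDual ℝ _ (gradient F x)) x :=
    (hdiff x).hasGradientAt.hasFDerivAt
  rw [h.fderiv, InnerProductSpace.toDual_apply_apply]

lemma my_inner_eq_sum (g v : EuclideanSpace ℝ (Fin p)) :
    (inner ℝ g v : ℝ) = ∑ j, g j * v j := by
  simp [PiLp.inner_apply, RCLike.inner_apply, mul_comm]

lemma my_grad_nonneg (hdiff : Differentiable ℝ F)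
    (hmono : ∀ x y : EuclideanSpace ℝ (Fin p),
      (∀ i, x i ∈ Set.Icc (0 : ℝ) 1) → (∀ i, y i ∈ Set.Icc (0 : ℝ) 1) →
      (∀ i, x i ≤ y i) → F x ≤ F y)
    (x : EuclideanSpace ℝ (Fin p)) (hx : ∀ i, x i ∈ Set.Icc (0 : ℝ) 1) (i : Fin p) :
    0 ≤ gradient F x i := by
  set e : EuclideanSpace ℝ (Fin p) := EuclideanSpace.single i (1:ℝ) with he
  set P : ℝ → EuclideanSpace ℝ (Fin p) := fun t => x + (t - x i) • e with hP
  have hPapp : ∀ t j, P t j = if j = i then t else x j := by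
    intro t j
    rcases eq_or_ne j i with h | h
    · subst h; simp [hP, he, EuclideanSpace.single_apply]
    · simp [hP, he, EuclideanSpace.single_apply, h]
  have hline : ∀ t : ℝ, HasDerivAt P e t := by
    intro t
    simpa [hP] using (((hasDerivAt_id t).sub_const (x i)).smul_const e).const_add x
  have hh : ∀ t : ℝ, HasDerivAt (fun t => F (P t)) (fderiv ℝ F (P t) e) t :=
    fun t => (hdiff (P t)).hasFDerivAt.comp_hasDerivAt t (hline t)
  have hmonoP : MonotoneOn (fun t => F (P t)) (Set.Icc 0 1) := by
    intro s hs t ht hst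
    refine hmono _ _ ?_ ?_ ?_
    · intro j; rw [hPapp]; by_cases h : j = i <;> simp [h, hs, hx j]
    · intro j; rw [hPapp]; by_cases h : j = i <;> simp [h, ht, hx j]
    · intro j; rw [hPapp, hPapp]; by_cases h : j = i <;> simp [h, hst]
  have hxi : P (x i) = x := by
    ext j; rw [hPapp]
    rcases eq_or_ne j i with h | h
    · subst h; simp
    · simp [h]
  have h0 : 0 ≤ deriv (fun t => F (P t)) (x i) :=
    my_deriv_nonneg (hh (x i)).differentiableAt hmonoP (hx i)
  rw [(hh (x i)).deriv, hxi, my_fderiv_eq_inner hdiff, my_inner_eq_sum] at h0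
  simpa [he, EuclideanSpace.single_apply] using h0

end main

/-- For a differentiable monotone DR-submodular function `F` on `[0,1]^p`
(monotone: `x ≤ y ⟹ F x ≤ F y`; DR: `x ≤ y ⟹ ∇F(y) ≤ ∇F(x)` componentwise),
for all `x, x* ∈ [0,1]^p` we have `F(x*) − F(x) ≤ ⟨∇F(x), x*⟩`. -/
theorem stmt_11 (p : ℕ) (F : EuclideanSpace ℝ (Fin p) → ℝ)
    (hdiff : Differentiable ℝ F)
    (hmono : ∀ x y : EuclideanSpace ℝ (Fin p),
      (∀ i, x i ∈ Set.Icc (0 : ℝ) 1) → (∀ i, y i ∈ Set.Icc (0 : ℝ) 1) →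
      (∀ i, x i ≤ y i) → F x ≤ F y)
    (hDR : ∀ x y : EuclideanSpace ℝ (Fin p),
      (∀ i, x i ∈ Set.Icc (0 : ℝ) 1) → (∀ i, y i ∈ Set.Icc (0 : ℝ) 1) →
      (∀ i, x i ≤ y i) → ∀ i, gradient F y i ≤ gradient F x i) :
    ∀ x xstar : EuclideanSpace ℝ (Fin p),
      (∀ i, x i ∈ Set.Icc (0 : ℝ) 1) → (∀ i, xstar i ∈ Set.Icc (0 : ℝ) 1) →
      F xstar - F x ≤ (inner ℝ (gradient F x) xstar : ℝ) := by
  intro x xstar hx hxs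
  set z : EuclideanSpace ℝ (Fin p) := WithLp.toLp 2 (fun j => max (x j) (xstar j)) with hzdef
  have hzapp : ∀ j, z j = max (x j) (xstar j) := fun j => rfl
  have hzbox : ∀ j, z j ∈ Set.Icc (0:ℝ) 1 := fun j =>
    ⟨le_trans (hx j).1 (le_max_left _ _), max_le (hx j).2 (hxs j).2⟩
  set v : EuclideanSpace ℝ (Fin p) := z - x with hvdef
  have hvapp : ∀ j, v j = max (x j) (xstar j) - x j := fun j => rfl
  have hv0 : ∀ j, 0 ≤ v j := fun j => by rw [hvapp]; simp [le_max_left]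
  set C : ℝ := inner ℝ (gradient F x) v with hC
  -- F xstar ≤ F z
  have step1 : F xstar ≤ F z := hmono _ _ hxs hzbox (fun j => le_max_right _ _)
  -- the line t ↦ x + t • v
  set P : ℝ → EuclideanSpace ℝ (Fin p) := fun t => x + t • v with hP
  have hPapp : ∀ t j, P t j = x j + t * v j := fun t j => rfl
  have hPbox : ∀ t, t ∈ Set.Icc (0:ℝ) 1 → ∀ j, P t j ∈ Set.Icc (0:ℝ) 1 := by
    intro t ht j
    have h1 := hv0 j
    have h2 : x j + t * v j ≤ x j + v j := by nlinarith [ht.1, ht.2]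
    have h3 : x j + v j = z j := by rw [hvapp, hzapp]; ring
    constructor
    · rw [hPapp]; nlinarith [(hx j).1, ht.1]
    · rw [hPapp]; linarith [(hzbox j).2]
  have hPge : ∀ t, 0 ≤ t → ∀ j, x j ≤ P t j := by
    intro t ht j; rw [hPapp]; nlinarith [hv0 j]
  have hline : ∀ t : ℝ, HasDerivAt P v t := fun t => by
    simpa [hP] using ((hasDerivAt_id t).smul_const v).const_add x
  set ψ : ℝ → ℝ := fun t => C * t - F (P t) with hψ
  have hψd : ∀ t : ℝ, HasDerivAt ψ (C - fderiv ℝ F (P t) v) t := by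
    intro t
    have h1 : HasDerivAt (fun s => F (P s)) (fderiv ℝ F (P t) v) t :=
      (hdiff (P t)).hasFDerivAt.comp_hasDerivAt t (hline t)
    have h2 : HasDerivAt (fun s : ℝ => C * s) C t := by
      simpa using (hasDerivAt_id t).const_mul C
    exact h2.sub h1
  have hψmono : MonotoneOn ψ (Set.Icc 0 1) := by
    refine monotoneOn_of_deriv_nonneg (convex_Icc 0 1)
      (fun t _ => (hψd t).differentiableAt.continuousAt.continuousWithinAt)
      (fun t _ => (hψd t).differentiableAt.differentiableWithinAt) ?_
    intro t ht
    rw [interior_Icc] at ht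
    rw [(hψd t).deriv, my_fderiv_eq_inner hdiff, sub_nonneg, hC,
      my_inner_eq_sum, my_inner_eq_sum]
    refine Finset.sum_le_sum fun j _ => ?_
    exact mul_le_mul_of_nonneg_right
      (hDR x (P t) hx (hPbox t ⟨ht.1.le, ht.2.le⟩) (hPge t ht.1.le) j) (hv0 j)
  have step2 : F z - F x ≤ C := by
    have h01 := hψmono (Set.left_mem_Icc.2 one_pos.le) (Set.right_mem_Icc.2 one_pos.le)
      one_pos.le
    have hP0 : P 0 = x := by simp [hP]
    have hP1 : P 1 = z := by simp [hP, hvdef]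
    simp only [hψ, hP0, hP1, mul_zero, mul_one, zero_sub] at h01
    linarith
  have step3 : C ≤ (inner ℝ (gradient F x) xstar : ℝ) := by
    rw [hC, my_inner_eq_sum, my_inner_eq_sum]
    refine Finset.sum_le_sum fun j _ => ?_
    have hg := my_grad_nonneg hdiff hmono x hx j
    have hvle : v j ≤ xstar j := by
      rw [hvapp]
      rcases le_total (x j) (xstar j) with h | h
      · simp [max_eq_right h]; exact (hx j).1
      · simp [max_eq_left h]; exact (hxs j).1
    exact mul_le_mul_of_nonneg_left hvle hg
  linarith
end

section
/- Let p ≥ 1, let f : ℝ^p → ℝ be Lipschitz, let δ > 0, and define f̂_δ(x) = ∫ f(x + δv) dμ(v), where μ is the uniform probability measure on the closed unit ball of ℝ^p. Then f̂_δ is differentiable on ℝ^p and for every x, ∇f̂_δ(x) = (p/δ)·∫_{S^{p−1}} f(x + δu)·u dσ(u), where σ is the uniform probability measure on the unit sphere S^{p−1} ⊂ ℝ^p. -/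
open MeasureTheory Metric Set
open scoped RealInnerProductSpace

variable {p : ℕ}
local notation "E" => EuclideanSpace ℝ (Fin p)

lemma sphere_radius_iff (h u : E) (hu : ‖u‖ = 1) (hh : ‖h‖ ≤ 1/2) (r : ℝ) (hr : 0 < r) :
    ‖r • u - h‖ ≤ 1 ↔ r ≤ ⟪u, h⟫ + Real.sqrt (1 - ‖h‖^2 + ⟪u, h⟫^2) := by
  set t := ⟪u, h⟫ with ht
  have hts : |t| ≤ ‖h‖ := by
    calc |t| ≤ ‖u‖ * ‖h‖ := abs_real_inner_le_norm u h
    _ = ‖h‖ := by rw [hu, one_mul]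
  have harg : 0 ≤ 1 - ‖h‖^2 + t^2 := by nlinarith [norm_nonneg h, abs_nonneg t]
  set s := Real.sqrt (1 - ‖h‖^2 + t^2) with hs
  have hs0 : 0 ≤ s := Real.sqrt_nonneg _
  have hs2 : s^2 = 1 - ‖h‖^2 + t^2 := Real.sq_sqrt harg
  have hst : |t| ≤ s := by nlinarith [abs_nonneg t, sq_abs t]
  have hexp : ‖r • u - h‖^2 = r^2 - 2*r*t + ‖h‖^2 := by
    have h1 : ⟪r • u, h⟫ = r * t := real_inner_smul_left u h r
    have h2 : ‖r • u‖ = r := by rw [norm_smul, hu, mul_one, Real.norm_eq_abs, abs_of_pos hr]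
    rw [norm_sub_sq_real, h1, h2]; ring
  constructor
  · intro hle
    have h2 : ‖r • u - h‖^2 ≤ 1 := by nlinarith [norm_nonneg (r • u - h)]
    nlinarith [abs_le.mp hst]
  · intro hle
    have h2 : ‖r • u - h‖^2 ≤ 1 := by nlinarith [abs_le.mp hst]
    nlinarith [norm_nonneg (r • u - h)]

lemma rho_bounds (nh t : ℝ) (hh0 : 0 ≤ nh) (hh : nh ≤ 1/2) (hts : |t| ≤ nh) :
    1/4 ≤ t + Real.sqrt (1 - nh^2 + t^2) ∧ t + Real.sqrt (1 - nh^2 + t^2) ≤ 2 ∧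
      |t + Real.sqrt (1 - nh^2 + t^2) - 1 - t| ≤ nh^2 ∧
      |t + Real.sqrt (1 - nh^2 + t^2) - 1| ≤ 2*nh := by
  set s := Real.sqrt (1 - nh^2 + t^2) with hsdef
  have harg : 0 ≤ 1 - nh^2 + t^2 := by nlinarith [abs_nonneg t, sq_abs t]
  have hs0 : 0 ≤ s := Real.sqrt_nonneg _
  have hs2 : s^2 = 1 - nh^2 + t^2 := Real.sq_sqrt harg
  have ht2 : t^2 ≤ nh^2 := by nlinarith [sq_abs t, abs_nonneg t]
  have hs_le : s ≤ 1 := by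
    have h1 : s ≤ Real.sqrt 1 := Real.sqrt_le_sqrt (by nlinarith)
    simpa using h1
  have hs_ge : 1 - (nh^2 - t^2) ≤ s := by
    rcases le_or_gt (1 - (nh^2 - t^2)) 0 with h1 | h1
    · linarith
    · nlinarith [sq_nonneg (s - (1 - (nh^2 - t^2)))]
  have habs := abs_le.mp hts
  refine ⟨by nlinarith, by nlinarith, ?_, ?_⟩
  · rw [abs_le]; constructor <;> nlinarith
  · rw [abs_le]; constructor <;> nlinarith

lemma pow_near_one (n : ℕ) (r : ℝ) (h0 : 0 ≤ r) (h2 : r ≤ 2) :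
    |r^n - 1| ≤ (n * 2^n) * |r - 1| := by
  rw [← geom_sum_mul r n, abs_mul]
  gcongr
  calc |∑ i ∈ Finset.range n, r ^ i| ≤ ∑ i ∈ Finset.range n, |r ^ i| :=
        Finset.abs_sum_le_sum_abs _ _
    _ ≤ ∑ _i ∈ Finset.range n, (2:ℝ)^n := by
        refine Finset.sum_le_sum fun i hi => ?_
        rw [abs_pow, abs_of_nonneg h0]
        exact (pow_le_pow_left₀ h0 h2 i).trans (pow_le_pow_right₀ one_le_two
          (Finset.mem_range.mp hi).le)
    _ = n * 2^n := by simp [mul_comm]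

lemma polar_decomp (hp : 1 ≤ p) (F : E → ℝ)
    (hFm : Measurable F) (M : ℝ) (hFb : ∀ y, |F y| ≤ M)
    (hFs : ∀ y : E, 2 < ‖y‖ → F y = 0) :
    (∫ y, F y) = (∫ u : sphere (0 : E) 1,
        (∫ r in Ioi (0:ℝ), r^(p-1) * F (r • (u : E)))
        ∂((volume : Measure E).toSphere)) ∧
    Integrable (fun u : sphere (0 : E) 1 =>
        ∫ r in Ioi (0:ℝ), r^(p-1) * F (r • (u : E)))
      ((volume : Measure E).toSphere) := by
  haveI : Nonempty (Fin p) := Fin.pos_iff_nonempty.mp hp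
  haveI : Nontrivial E := inferInstance
  have hfr : Module.finrank ℝ E = p := finrank_euclideanSpace_fin
  set ν := (volume : Measure E).toSphere with hν
  set vp := Measure.volumeIoiPow (p - 1) with hvp
  set φ : sphere (0:E) 1 × Ioi (0:ℝ) → ℝ :=
    F ∘ Subtype.val ∘ (homeomorphUnitSphereProd E).symm with hφ
  have hφm : Measurable φ := by
    rw [hφ]
    exact hFm.comp (measurable_subtype_coe.comp (Homeomorph.measurable _))
  have hφval : ∀ z, φ z = F ((z.2 : ℝ) • (z.1 : E)) := by
    intro z
    simp [hφ, homeomorphUnitSphereProd]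
  have hM0 : 0 ≤ M := le_trans (abs_nonneg _) (hFb 0)
  -- integrability of φ
  have hset : MeasurableSet ((univ : Set (sphere (0:E) 1)) ×ˢ {r : Ioi (0:ℝ) | (r:ℝ) ≤ 2}) := by
    refine MeasurableSet.prod MeasurableSet.univ ?_
    exact measurable_subtype_coe measurableSet_Iic
  have hfin : (ν.prod vp) ((univ : Set (sphere (0:E) 1)) ×ˢ {r : Ioi (0:ℝ) | (r:ℝ) ≤ 2}) < ⊤ := by
    rw [Measure.prod_prod]
    refine ENNReal.mul_lt_top (measure_lt_top _ _) ?_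
    have hsub : {r : Ioi (0:ℝ) | (r:ℝ) ≤ 2} ⊆ Iio (⟨3, by norm_num⟩ : Ioi (0:ℝ)) :=
      fun r hr => by
        simp only [mem_Iio, ← Subtype.coe_lt_coe]
        exact lt_of_le_of_lt hr (by norm_num)
    refine lt_of_le_of_lt (measure_mono hsub) ?_
    rw [hvp, Measure.volumeIoiPow_apply_Iio]
    exact ENNReal.ofReal_lt_top
  have hdom : Integrable (((univ : Set (sphere (0:E) 1)) ×ˢ
      {r : Ioi (0:ℝ) | (r:ℝ) ≤ 2}).indicator fun _ => M) (ν.prod vp) :=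
    (integrable_indicator_iff hset).2 <| integrableOn_const hfin.ne
  have hφi : Integrable φ (ν.prod vp) := by
    refine hdom.mono' hφm.aestronglyMeasurable (Filter.Eventually.of_forall fun z => ?_)
    rw [hφval]
    rcases le_or_gt ((z.2 : ℝ)) 2 with h2 | h2
    · have hz : z ∈ (univ : Set (sphere (0:E) 1)) ×ˢ {r : Ioi (0:ℝ) | (r:ℝ) ≤ 2} :=
        ⟨mem_univ _, h2⟩
      rw [indicator_of_mem hz, Real.norm_eq_abs]
      exact hFb _
    · have hnorm : ‖(z.2 : ℝ) • (z.1 : E)‖ = (z.2 : ℝ) := by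
        rw [norm_smul, mem_sphere_zero_iff_norm.mp z.1.2, mul_one, Real.norm_eq_abs,
          abs_of_pos z.2.2]
      rw [hFs _ (by rw [hnorm]; exact h2)]
      have hz : z ∉ (univ : Set (sphere (0:E) 1)) ×ˢ {r : Ioi (0:ℝ) | (r:ℝ) ≤ 2} := by
        intro hz; exact absurd hz.2 (not_le.mpr h2)
      rw [indicator_of_notMem hz]
      simp
  -- the inner integral rewrite
  have h4 : ∀ u : sphere (0:E) 1, (∫ r : Ioi (0:ℝ), φ (u, r) ∂vp)
      = ∫ r in Ioi (0:ℝ), r^(p-1) * F (r • (u:E)) := by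
    intro u
    have hval : ∀ r : Ioi (0:ℝ), φ (u, r) = F ((r:ℝ) • (u:E)) := fun r => hφval (u, r)
    simp only [hval]
    rw [hvp]
    simp only [Measure.volumeIoiPow, ENNReal.ofReal]
    rw [integral_withDensity_eq_integral_smul
        ((measurable_subtype_coe.pow_const _).real_toNNReal),
      integral_subtype_comap measurableSet_Ioi
        (fun a : ℝ => Real.toNNReal (a ^ (p-1)) • F (a • (u:E)))]
    refine setIntegral_congr_fun measurableSet_Ioi fun r hr => ?_
    rw [NNReal.smul_def, Real.coe_toNNReal _ (pow_nonneg hr.out.le _), smul_eq_mul]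
  -- main chain
  have hmp := (volume : Measure E).measurePreserving_homeomorphUnitSphereProd
  rw [hfr] at hmp
  have h2 : ∫ x : ({0}ᶜ : Set E), φ (homeomorphUnitSphereProd E x)
        ∂((volume : Measure E).comap Subtype.val)
      = ∫ z, φ z ∂(ν.prod vp) :=
    hmp.integral_comp (Homeomorph.measurableEmbedding _) φ
  constructor
  · calc ∫ y, F y = ∫ x : ({0}ᶜ : Set E), F x ∂((volume : Measure E).comap Subtype.val) := by
          rw [integral_subtype_comap (measurableSet_singleton 0).compl,
            restrict_compl_singleton]
      _ = ∫ x : ({0}ᶜ : Set E), φ (homeomorphUnitSphereProd E x)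
            ∂((volume : Measure E).comap Subtype.val) := by
          refine integral_congr_ae (Filter.Eventually.of_forall fun x => ?_)
          simp [hφ]
      _ = ∫ z, φ z ∂(ν.prod vp) := h2
      _ = ∫ u, (∫ r : Ioi (0:ℝ), φ (u, r) ∂vp) ∂ν := integral_prod φ hφi
      _ = _ := integral_congr_ae (Filter.Eventually.of_forall fun u => h4 u)
  · exact hφi.integral_prod_left.congr (Filter.Eventually.of_forall fun u => h4 u)


lemma key (hp : 1 ≤ p) (g : E → ℝ) (L : ℝ) (hL : 0 ≤ L)
    (hg : ∀ a b : E, |g a - g b| ≤ L * ‖a - b‖) :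
    ∃ C : ℝ, 0 ≤ C ∧ ∀ h : E, ‖h‖ ≤ 1/2 →
      |(∫ y in closedBall h 1, g y) - (∫ y in closedBall (0:E) 1, g y)
        - ∫ u : sphere (0:E) 1, g u * ⟪(u:E), h⟫ ∂((volume : Measure E).toSphere)|
      ≤ C * ‖h‖^2 := by
  have hgc : Continuous g := by
    rw [Metric.continuous_iff]
    intro b ε hε
    rcases le_or_gt L 0 with h0 | h0
    · exact ⟨1, one_pos, fun a _ => by
        have := hg a b
        have h2 : |g a - g b| ≤ 0 := this.trans (by nlinarith [norm_nonneg (a - b)])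
        rw [Real.dist_eq]
        nlinarith [abs_nonneg (g a - g b)]⟩
    · refine ⟨ε / L, by positivity, fun a ha => ?_⟩
      rw [Real.dist_eq]
      calc |g a - g b| ≤ L * ‖a - b‖ := hg a b
        _ < L * (ε / L) := by
            rw [dist_eq_norm] at ha
            exact (mul_lt_mul_iff_right₀ h0).2 ha
        _ = ε := by field_simp
  set ν := (volume : Measure E).toSphere with hν
  set M : ℝ := |g 0| + 2*L with hM
  have hM0 : 0 ≤ M := by positivity
  have hMy : ∀ y : E, ‖y‖ ≤ 2 → |g y| ≤ M := by
    intro y hy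
    have := hg y 0
    rw [sub_zero] at this
    calc |g y| ≤ |g y - g 0| + |g 0| := by
          have := abs_add_le (g y - g 0) (g 0); simpa using this
      _ ≤ M := by nlinarith [abs_nonneg (g 0)]
  set n : ℕ := p - 1 with hn
  set K : ℝ := 2^n * L + M * (n * 2^n) with hK
  have hK0 : 0 ≤ K := by positivity
  refine ⟨(4*K + M) * (ν univ).toReal, by positivity, fun h hh => ?_⟩
  -- the function F
  set F : E → ℝ := fun y => (closedBall h 1).indicator g y - (closedBall (0:E) 1).indicator g y
    with hF
  have hFm : Measurable F :=
    ((hgc.measurable).indicator measurableSet_closedBall).sub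
      ((hgc.measurable).indicator measurableSet_closedBall)
  have hind : ∀ (c : E), ‖c‖ ≤ 1 → ∀ y, |(closedBall c 1).indicator g y| ≤ M := by
    intro c hc y
    rcases em (y ∈ closedBall c 1) with hy | hy
    · rw [indicator_of_mem hy]
      refine hMy y ?_
      rw [mem_closedBall_iff_norm] at hy
      calc ‖y‖ = ‖(y - c) + c‖ := by rw [sub_add_cancel]
        _ ≤ ‖y - c‖ + ‖c‖ := norm_add_le _ _
        _ ≤ 2 := by linarith
    · rw [indicator_of_notMem hy, abs_zero]; exact hM0
  have hFb : ∀ y, |F y| ≤ 2*M := by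
    intro y
    calc |F y| ≤ |(closedBall h 1).indicator g y| + |(closedBall (0:E) 1).indicator g y| :=
          abs_sub _ _
      _ ≤ 2*M := by
          have h1 := hind h (by linarith) y
          have h2 := hind 0 (by simp) y
          linarith
  have hFs : ∀ y : E, 2 < ‖y‖ → F y = 0 := by
    intro y hy
    have h1 : y ∉ closedBall h 1 := by
      rw [mem_closedBall_iff_norm]
      intro hmem
      have : ‖y‖ ≤ ‖y - h‖ + ‖h‖ := by
        calc ‖y‖ = ‖(y - h) + h‖ := by rw [sub_add_cancel]
          _ ≤ _ := norm_add_le _ _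
      linarith
    have h2 : y ∉ closedBall (0:E) 1 := by
      rw [mem_closedBall_iff_norm, sub_zero]
      linarith
    rw [hF]
    simp only [indicator_of_notMem h1, indicator_of_notMem h2, sub_zero]
  obtain ⟨hpolar, hint⟩ := polar_decomp hp F hFm (2*M) hFb hFs
  -- Step A
  have hiOn : ∀ c : E, IntegrableOn g (closedBall c 1) :=
    fun c => hgc.continuousOn.integrableOn_compact (isCompact_closedBall c 1)
  have hstepA : (∫ y in closedBall h 1, g y) - (∫ y in closedBall (0:E) 1, g y) = ∫ y, F y := by
    rw [hF, integral_sub ((integrable_indicator_iff measurableSet_closedBall).2 (hiOn h))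
      ((integrable_indicator_iff measurableSet_closedBall).2 (hiOn 0)),
      integral_indicator measurableSet_closedBall, integral_indicator measurableSet_closedBall]
  -- per-u data
  have husphere : ∀ u : sphere (0:E) 1, ‖(u:E)‖ = 1 := fun u => mem_sphere_zero_iff_norm.mp u.2
  set tf : sphere (0:E) 1 → ℝ := fun u => ⟪(u:E), h⟫ with htf
  set ρf : sphere (0:E) 1 → ℝ := fun u => tf u + Real.sqrt (1 - ‖h‖^2 + (tf u)^2) with hρf
  have hts : ∀ u, |tf u| ≤ ‖h‖ := by
    intro u
    calc |tf u| ≤ ‖(u:E)‖ * ‖h‖ := abs_real_inner_le_norm _ _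
      _ = ‖h‖ := by rw [husphere u, one_mul]
  have hρ : ∀ u, 1/4 ≤ ρf u ∧ ρf u ≤ 2 ∧ |ρf u - 1 - tf u| ≤ ‖h‖^2 ∧ |ρf u - 1| ≤ 2*‖h‖ :=
    fun u => rho_bounds ‖h‖ (tf u) (norm_nonneg h) hh (hts u)
  -- Step C
  have hstepC : ∀ u : sphere (0:E) 1, (∫ r in Ioi (0:ℝ), r^n * F (r • (u:E)))
      = ∫ r in (1:ℝ)..(ρf u), r^n * g (r • (u:E)) := by
    intro u
    obtain ⟨hρ1, hρ2, hρ3, hρ4⟩ := hρ u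
    set ψ : ℝ → ℝ := fun r => r^n * g (r • (u:E)) with hψ
    have hψc : Continuous ψ := (continuous_pow n).mul (hgc.comp (continuous_id.smul continuous_const))
    have hψint : ∀ a b : ℝ, IntervalIntegrable ψ volume a b := fun a b => hψc.intervalIntegrable a b
    have hcongr : ∀ r ∈ Ioi (0:ℝ), r^n * F (r • (u:E))
        = (Iic (ρf u)).indicator ψ r - (Iic (1:ℝ)).indicator ψ r := by
      intro r hr
      have hr0 : 0 < r := hr
      have hmem1 : r • (u:E) ∈ closedBall h 1 ↔ r ≤ ρf u := by
        rw [mem_closedBall_iff_norm]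
        exact sphere_radius_iff h u (husphere u) hh r hr0
      have hmem2 : r • (u:E) ∈ closedBall (0:E) 1 ↔ r ≤ 1 := by
        rw [mem_closedBall_iff_norm, sub_zero, norm_smul, husphere u, mul_one,
          Real.norm_eq_abs, abs_of_pos hr0]
      have e1 : r^n * (closedBall h 1).indicator g (r • (u:E)) = (Iic (ρf u)).indicator ψ r := by
        rcases em (r ≤ ρf u) with hc | hc
        · rw [indicator_of_mem (hmem1.2 hc), indicator_of_mem (mem_Iic.2 hc)]
        · rw [indicator_of_notMem (fun hm => hc (hmem1.1 hm)),
            indicator_of_notMem (fun hm => hc (mem_Iic.1 hm)), mul_zero]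
      have e2 : r^n * (closedBall (0:E) 1).indicator g (r • (u:E)) = (Iic (1:ℝ)).indicator ψ r := by
        rcases em (r ≤ (1:ℝ)) with hc | hc
        · rw [indicator_of_mem (hmem2.2 hc), indicator_of_mem (mem_Iic.2 hc)]
        · rw [indicator_of_notMem (fun hm => hc (hmem2.1 hm)),
            indicator_of_notMem (fun hm => hc (mem_Iic.1 hm)), mul_zero]
      calc r^n * F (r • (u:E))
          = r^n * (closedBall h 1).indicator g (r • (u:E))
            - r^n * (closedBall (0:E) 1).indicator g (r • (u:E)) := by rw [hF]; ring
        _ = _ := by rw [e1, e2]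
    have hindint : ∀ c : ℝ, 0 < c →
        Integrable ((Iic c).indicator ψ) (volume.restrict (Ioi (0:ℝ))) := by
      intro c hc
      refine (integrable_indicator_iff measurableSet_Iic).2 ?_
      have : IntegrableOn ψ (Iic c) (volume.restrict (Ioi (0:ℝ))) := by
        rw [IntegrableOn, Measure.restrict_restrict measurableSet_Iic]
        have hseteq : Iic c ∩ Ioi 0 = Ioc 0 c := by
          rw [Set.inter_comm, Set.Ioi_inter_Iic]
        rw [hseteq]
        exact (hψc.continuousOn.integrableOn_compact isCompact_Icc).mono_set Ioc_subset_Icc_self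
      exact this
    calc (∫ r in Ioi (0:ℝ), r^n * F (r • (u:E)))
        = ∫ r in Ioi (0:ℝ), ((Iic (ρf u)).indicator ψ r - (Iic (1:ℝ)).indicator ψ r) :=
          setIntegral_congr_fun measurableSet_Ioi hcongr
      _ = (∫ r in Ioi (0:ℝ), (Iic (ρf u)).indicator ψ r)
          - ∫ r in Ioi (0:ℝ), (Iic (1:ℝ)).indicator ψ r :=
          integral_sub (hindint (ρf u) (lt_of_lt_of_le (by norm_num : (0:ℝ) < 1/4) hρ1)) (hindint 1 one_pos)
      _ = (∫ r in Ioc (0:ℝ) (ρf u), ψ r) - ∫ r in Ioc (0:ℝ) 1, ψ r := by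
          rw [setIntegral_indicator measurableSet_Iic, setIntegral_indicator measurableSet_Iic,
            Set.Ioi_inter_Iic, Set.Ioi_inter_Iic]
      _ = (∫ r in (0:ℝ)..(ρf u), ψ r) - ∫ r in (0:ℝ)..(1:ℝ), ψ r := by
          rw [intervalIntegral.integral_of_le (le_trans (by norm_num : (0:ℝ) ≤ 1/4) hρ1),
            intervalIntegral.integral_of_le (by norm_num : (0:ℝ) ≤ 1)]
      _ = ∫ r in (1:ℝ)..(ρf u), ψ r :=
          intervalIntegral.integral_interval_sub_left (hψint 0 (ρf u)) (hψint 0 1)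
  -- Step D
  have hstepD : ∀ u : sphere (0:E) 1,
      |(∫ r in (1:ℝ)..(ρf u), r^n * g (r • (u:E))) - g u * tf u| ≤ (4*K + M) * ‖h‖^2 := by
    intro u
    obtain ⟨hρ1, hρ2, hρ3, hρ4⟩ := hρ u
    set ψ : ℝ → ℝ := fun r => r^n * g (r • (u:E)) with hψ
    have hψc : Continuous ψ := (continuous_pow n).mul (hgc.comp (continuous_id.smul continuous_const))
    have hgu : |g u| ≤ M := hMy _ (by rw [husphere u]; norm_num)
    have hbound : ∀ r ∈ uIoc (1:ℝ) (ρf u), ‖ψ r - g u‖ ≤ K * (2*‖h‖) := by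
      intro r hr
      have hrfacts : 0 ≤ r ∧ r ≤ 2 ∧ |r - 1| ≤ 2*‖h‖ := by
        have h4 := abs_le.mp hρ4
        rcases mem_uIoc.mp hr with ⟨ha, hb⟩ | ⟨ha, hb⟩
        · exact ⟨by linarith, by linarith, abs_le.mpr ⟨by linarith, by linarith⟩⟩
        · exact ⟨by linarith, by linarith, abs_le.mpr ⟨by linarith, by linarith⟩⟩
      obtain ⟨hr0, hr2, hr1⟩ := hrfacts
      have hdecomp : ψ r - g u = r^n * (g (r • (u:E)) - g u) + g u * (r^n - 1) := by
        rw [hψ]; ring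
      have hnorm_ru : ‖r • (u:E) - (u:E)‖ = |r - 1| := by
        have : r • (u:E) - (u:E) = (r - 1) • (u:E) := by
          rw [sub_smul, one_smul]
        rw [this, norm_smul, husphere u, mul_one, Real.norm_eq_abs]
      have hlip : |g (r • (u:E)) - g u| ≤ L * |r - 1| := by
        have := hg (r • (u:E)) u
        rwa [hnorm_ru] at this
      have hpow : |r^n - 1| ≤ (n * 2^n) * |r - 1| := pow_near_one n r hr0 hr2
      have hrn : r^n ≤ 2^n := pow_le_pow_left₀ hr0 hr2 n
      have hrn0 : 0 ≤ r^n := pow_nonneg hr0 n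
      rw [Real.norm_eq_abs, hdecomp]
      calc |r^n * (g (r • (u:E)) - g u) + g u * (r^n - 1)|
          ≤ |r^n * (g (r • (u:E)) - g u)| + |g u * (r^n - 1)| := abs_add_le _ _
        _ = r^n * |g (r • (u:E)) - g u| + |g u| * |r^n - 1| := by
            rw [abs_mul, abs_mul, abs_of_nonneg hrn0]
        _ ≤ 2^n * (L * |r - 1|) + M * ((n * 2^n) * |r - 1|) := by
            refine add_le_add ?_ ?_
            · exact mul_le_mul hrn hlip (abs_nonneg _) (by positivity)
            · exact mul_le_mul hgu hpow (abs_nonneg _) hM0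
        _ = K * |r - 1| := by rw [hK]; ring
        _ ≤ K * (2*‖h‖) := by
            exact mul_le_mul_of_nonneg_left hr1 hK0
    have hmain : ‖∫ r in (1:ℝ)..(ρf u), (ψ r - g u)‖ ≤ K * (2*‖h‖) * |ρf u - 1| :=
      intervalIntegral.norm_integral_le_of_norm_le_const hbound
    have hsplit : (∫ r in (1:ℝ)..(ρf u), ψ r) - (ρf u - 1) * g u
        = ∫ r in (1:ℝ)..(ρf u), (ψ r - g u) := by
      rw [intervalIntegral.integral_sub (hψc.intervalIntegrable _ _) intervalIntegrable_const,
        intervalIntegral.integral_const, smul_eq_mul]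
    have e1 : |(∫ r in (1:ℝ)..(ρf u), ψ r) - (ρf u - 1) * g u| ≤ K * (2*‖h‖) * (2*‖h‖) := by
      rw [hsplit]
      calc |∫ r in (1:ℝ)..(ρf u), (ψ r - g u)| ≤ K * (2*‖h‖) * |ρf u - 1| := hmain
        _ ≤ K * (2*‖h‖) * (2*‖h‖) := by
            refine mul_le_mul_of_nonneg_left hρ4 ?_
            positivity
    have e2 : |(ρf u - 1) * g u - g u * tf u| ≤ M * ‖h‖^2 := by
      have : (ρf u - 1) * g u - g u * tf u = g u * (ρf u - 1 - tf u) := by ring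
      rw [this, abs_mul]
      exact mul_le_mul hgu hρ3 (abs_nonneg _) hM0
    calc |(∫ r in (1:ℝ)..(ρf u), ψ r) - g u * tf u|
        = |((∫ r in (1:ℝ)..(ρf u), ψ r) - (ρf u - 1) * g u)
            + ((ρf u - 1) * g u - g u * tf u)| := by congr 1; ring
      _ ≤ |(∫ r in (1:ℝ)..(ρf u), ψ r) - (ρf u - 1) * g u|
            + |(ρf u - 1) * g u - g u * tf u| := abs_add_le _ _
      _ ≤ K * (2*‖h‖) * (2*‖h‖) + M * ‖h‖^2 := add_le_add e1 e2
      _ = (4*K + M) * ‖h‖^2 := by ring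
  -- Step E
  have hIint : Integrable (fun u : sphere (0:E) 1 =>
      ∫ r in (1:ℝ)..(ρf u), r^n * g (r • (u:E))) ν :=
    hint.congr (Filter.Eventually.of_forall hstepC)
  have hgt_int : Integrable (fun u : sphere (0:E) 1 => g u * tf u) ν := by
    have hcont : Continuous fun u : sphere (0:E) 1 => g u * tf u :=
      (hgc.comp continuous_subtype_val).mul (Continuous.inner continuous_subtype_val continuous_const)
    refine (integrable_const (M * ‖h‖)).mono' hcont.aestronglyMeasurable
      (Filter.Eventually.of_forall fun u => ?_)
    rw [Real.norm_eq_abs, abs_mul]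
    exact mul_le_mul (hMy _ (by rw [husphere u]; norm_num)) (hts u) (abs_nonneg _) hM0
  calc |(∫ y in closedBall h 1, g y) - (∫ y in closedBall (0:E) 1, g y)
        - ∫ u : sphere (0:E) 1, g u * ⟪(u:E), h⟫ ∂ν|
      = |(∫ u : sphere (0:E) 1, (∫ r in (1:ℝ)..(ρf u), r^n * g (r • (u:E))) ∂ν)
          - ∫ u : sphere (0:E) 1, g u * tf u ∂ν| := by
        rw [hstepA, hpolar]
        congr 2
        exact integral_congr_ae (Filter.Eventually.of_forall hstepC)
    _ = |∫ u : sphere (0:E) 1,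
          ((∫ r in (1:ℝ)..(ρf u), r^n * g (r • (u:E))) - g u * tf u) ∂ν| := by
        rw [integral_sub hIint hgt_int]
    _ ≤ ((4*K + M) * ‖h‖^2) * (ν univ).toReal := by
        rw [← Real.norm_eq_abs]
        exact norm_integral_le_of_norm_le_const (Filter.Eventually.of_forall fun u => by
          rw [Real.norm_eq_abs]; exact hstepD u)
    _ = (4*K + M) * (ν univ).toReal * ‖h‖^2 := by ring

/-- One-point gradient estimator: for Lipschitz `f : ℝ^p → ℝ` and `δ > 0`, the
δ-smoothed version `f̂_δ(x) = 𝔼_{v∼Unif(B)}[f(x+δv)]` is differentiable with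
`∇f̂_δ(x) = (p/δ) 𝔼_{u∼Unif(S^{p−1})}[f(x+δu) u]`, where the expectation is with
respect to the uniform probability measure `σ` on the unit sphere. -/
theorem stmt_16 (p : ℕ) (hp : 1 ≤ p) (f : EuclideanSpace ℝ (Fin p) → ℝ)
    (hf : ∃ L : NNReal, LipschitzWith L f)
    (δ : ℝ) (hδ : 0 < δ)
    (μ : Measure (EuclideanSpace ℝ (Fin p)))
    (hμ : μ = (volume (Metric.closedBall (0 : EuclideanSpace ℝ (Fin p)) 1))⁻¹ •
      volume.restrict (Metric.closedBall (0 : EuclideanSpace ℝ (Fin p)) 1))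
    (fhat : EuclideanSpace ℝ (Fin p) → ℝ)
    (hfhat : ∀ x, fhat x = ∫ v, f (x + δ • v) ∂μ)
    (σ : Measure (Metric.sphere (0 : EuclideanSpace ℝ (Fin p)) 1))
    (hσ : σ = ((volume : Measure (EuclideanSpace ℝ (Fin p))).toSphere Set.univ)⁻¹ •
      (volume : Measure (EuclideanSpace ℝ (Fin p))).toSphere) :
    ∀ x, HasGradientAt fhat
      (((p : ℝ) / δ) •
        ∫ u, f (x + δ • (u : EuclideanSpace ℝ (Fin p))) • (u : EuclideanSpace ℝ (Fin p)) ∂σ)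
      x := by
  intro x
  obtain ⟨L0, hfL⟩ := hf
  haveI : Nonempty (Fin p) := Fin.pos_iff_nonempty.mp hp
  haveI : Nontrivial (EuclideanSpace ℝ (Fin p)) := inferInstance
  have hfr : Module.finrank ℝ (EuclideanSpace ℝ (Fin p)) = p := finrank_euclideanSpace_fin
  set ν := (volume : Measure (EuclideanSpace ℝ (Fin p))).toSphere with hν
  -- the rescaled function g
  set g : (EuclideanSpace ℝ (Fin p)) → ℝ := fun v => f (x + δ • v) with hgdef
  have hgL : ∀ a b : (EuclideanSpace ℝ (Fin p)), |g a - g b| ≤ ((L0 : ℝ) * δ) * ‖a - b‖ := by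
    intro a b
    have h1 := hfL.dist_le_mul (x + δ • a) (x + δ • b)
    rw [Real.dist_eq, dist_eq_norm] at h1
    have h2 : (x + δ • a) - (x + δ • b) = δ • (a - b) := by
      rw [smul_sub]; abel
    rw [h2, norm_smul, Real.norm_eq_abs, abs_of_pos hδ] at h1
    calc |g a - g b| ≤ L0 * (δ * ‖a - b‖) := h1
      _ = ((L0 : ℝ) * δ) * ‖a - b‖ := by ring
  obtain ⟨C, hC0, hkey⟩ := key hp g ((L0:ℝ) * δ) (by positivity) hgL
  have hgc : Continuous g :=
    hfL.continuous.comp (continuous_const.add (continuous_const_smul δ))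
  -- measure constants
  set c := volume (closedBall (0:(EuclideanSpace ℝ (Fin p))) 1) with hc
  have hc0 : c ≠ 0 := (measure_closedBall_pos volume 0 one_pos).ne'
  have hctop : c ≠ ⊤ := measure_closedBall_lt_top.ne
  set cR := c.toReal with hcR
  have hcR0 : 0 < cR := ENNReal.toReal_pos hc0 hctop
  have hballR : (volume (ball (0:(EuclideanSpace ℝ (Fin p))) 1)).toReal = cR := by
    rw [hcR, hc, Measure.addHaar_closedBall_eq_addHaar_ball]
  have hνU : (ν univ).toReal = p * cR := by
    rw [hν, Measure.toSphere_apply_univ, hfr, ENNReal.toReal_mul, ENNReal.toReal_natCast, hballR]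
  have hνU0 : ν univ ≠ 0 := by
    rw [hν, Measure.toSphere_apply_univ, hfr]
    refine mul_ne_zero ?_ ?_
    · exact Nat.cast_ne_zero.mpr (by omega)
    · exact (measure_ball_pos volume 0 one_pos).ne'
  have hνUtop : ν univ ≠ ⊤ := measure_lt_top ν univ |>.ne
  haveI hσfin : IsFiniteMeasure σ := by
    constructor
    rw [hσ, Measure.smul_apply, smul_eq_mul]
    exact ENNReal.mul_lt_top (ENNReal.inv_lt_top.2 (by
      rw [← hν] at *; exact pos_iff_ne_zero.mpr hνU0)) (measure_lt_top _ _)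
  -- bound for g on the sphere
  set Mg : ℝ := |g 0| + (L0:ℝ) * δ with hMg
  have hMg0 : 0 ≤ Mg := by positivity
  have hMgu : ∀ u : sphere (0:(EuclideanSpace ℝ (Fin p))) 1, |g (u:(EuclideanSpace ℝ (Fin p)))| ≤ Mg := by
    intro u
    have h1 := hgL (u:(EuclideanSpace ℝ (Fin p))) 0
    rw [sub_zero, mem_sphere_zero_iff_norm.mp u.2, mul_one] at h1
    calc |g (u:(EuclideanSpace ℝ (Fin p)))| ≤ |g (u:(EuclideanSpace ℝ (Fin p))) - g 0| + |g 0| := by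
          have := abs_add_le (g (u:(EuclideanSpace ℝ (Fin p))) - g 0) (g 0); simpa using this
      _ ≤ Mg := by rw [hMg]; linarith
  -- integrability of the vector field on the sphere
  have hvec_cont : Continuous fun u : sphere (0:(EuclideanSpace ℝ (Fin p))) 1 => g (u:(EuclideanSpace ℝ (Fin p))) • (u:(EuclideanSpace ℝ (Fin p))) :=
    (hgc.comp continuous_subtype_val).smul continuous_subtype_val
  have hIint : Integrable (fun u : sphere (0:(EuclideanSpace ℝ (Fin p))) 1 => g (u:(EuclideanSpace ℝ (Fin p))) • (u:(EuclideanSpace ℝ (Fin p)))) σ := by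
    refine (integrable_const Mg).mono' hvec_cont.aestronglyMeasurable
      (Filter.Eventually.of_forall fun u => ?_)
    rw [norm_smul, mem_sphere_zero_iff_norm.mp u.2, mul_one, Real.norm_eq_abs]
    exact hMgu u
  set I : (EuclideanSpace ℝ (Fin p)) := ∫ u : sphere (0:(EuclideanSpace ℝ (Fin p))) 1, g (u:(EuclideanSpace ℝ (Fin p))) • (u:(EuclideanSpace ℝ (Fin p))) ∂σ with hI
  set grad : (EuclideanSpace ℝ (Fin p)) := ((p : ℝ) / δ) • I with hgrad
  -- inner product with the gradient
  have hswap : ∀ h : (EuclideanSpace ℝ (Fin p)), ⟪I, h⟫ = ∫ u : sphere (0:(EuclideanSpace ℝ (Fin p))) 1, g (u:(EuclideanSpace ℝ (Fin p))) * ⟪(u:(EuclideanSpace ℝ (Fin p))), h⟫ ∂σ := by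
    intro h
    rw [real_inner_comm, hI, ← integral_inner hIint h]
    refine integral_congr_ae (Filter.Eventually.of_forall fun u => ?_)
    show (inner ℝ h (g (u:(EuclideanSpace ℝ (Fin p))) • (u:(EuclideanSpace ℝ (Fin p)))) : ℝ) = _
    rw [real_inner_smul_right, real_inner_comm]
  have hgradinner : ∀ h : (EuclideanSpace ℝ (Fin p)),
      ⟪grad, h⟫ = ((p:ℝ)/δ) * (((ν univ)⁻¹).toReal
        * ∫ u : sphere (0:(EuclideanSpace ℝ (Fin p))) 1, g (u:(EuclideanSpace ℝ (Fin p))) * ⟪(u:(EuclideanSpace ℝ (Fin p))), h⟫ ∂ν) := by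
    intro h
    rw [hgrad, real_inner_smul_left, hswap h, hσ, integral_smul_measure, smul_eq_mul]
  -- fhat in terms of g
  have hfhat_eq : ∀ z : (EuclideanSpace ℝ (Fin p)), (∫ v, f (z + δ • v) ∂μ)
      = cR⁻¹ * ∫ v in closedBall (0:(EuclideanSpace ℝ (Fin p))) 1, f (z + δ • v) := by
    intro z
    rw [hμ, integral_smul_measure, smul_eq_mul, ENNReal.toReal_inv, hcR, hc]
  -- the translation identity
  have htrans : ∀ h : (EuclideanSpace ℝ (Fin p)), (∫ v in closedBall (0:(EuclideanSpace ℝ (Fin p))) 1, g (v + δ⁻¹ • h))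
      = ∫ w in closedBall (δ⁻¹ • h) 1, g w := by
    intro h
    have hmp : MeasurePreserving (fun v : (EuclideanSpace ℝ (Fin p)) => v + δ⁻¹ • h) volume volume :=
      measurePreserving_add_right volume (δ⁻¹ • h)
    have hemb : MeasurableEmbedding (fun v : (EuclideanSpace ℝ (Fin p)) => v + δ⁻¹ • h) :=
      (MeasurableEquiv.addRight (δ⁻¹ • h)).measurableEmbedding
    have := hmp.setIntegral_preimage_emb hemb g (closedBall (δ⁻¹ • h) 1)
    have hpre : (fun v : (EuclideanSpace ℝ (Fin p)) => v + δ⁻¹ • h) ⁻¹' closedBall (δ⁻¹ • h) 1 = closedBall (0:(EuclideanSpace ℝ (Fin p))) 1 := by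
      ext v
      simp [mem_closedBall_iff_norm]
    rwa [hpre] at this
  -- the main quantitative estimate
  have hmain : ∀ h : (EuclideanSpace ℝ (Fin p)), ‖h‖ ≤ δ/2 →
      |fhat (x + h) - fhat x - ⟪grad, h⟫| ≤ (cR⁻¹ * C * (δ⁻¹)^2) * ‖h‖^2 := by
    intro h hh
    set b : (EuclideanSpace ℝ (Fin p)) := δ⁻¹ • h with hb
    have hbn : ‖b‖ = δ⁻¹ * ‖h‖ := by
      rw [hb, norm_smul, Real.norm_eq_abs, abs_of_pos (by positivity)]
    have hbh : ‖b‖ ≤ 1/2 := by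
      rw [hbn]
      rw [inv_mul_le_iff₀ hδ]
      linarith
    -- fhat (x+h)
    have hfh1 : fhat (x + h) = cR⁻¹ * ∫ w in closedBall b 1, g w := by
      rw [hfhat (x + h), hfhat_eq (x + h), ← htrans h]
      congr 1
      refine setIntegral_congr_fun measurableSet_closedBall fun v _ => ?_
      rw [hgdef]
      congr 1
      rw [smul_add, smul_inv_smul₀ (ne_of_gt hδ)]
      abel
    have hfh2 : fhat x = cR⁻¹ * ∫ w in closedBall (0:(EuclideanSpace ℝ (Fin p))) 1, g w := by
      rw [hfhat x, hfhat_eq x]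
    -- gradient inner product in terms of b
    have hginner : ⟪grad, h⟫ = cR⁻¹ * ∫ u : sphere (0:(EuclideanSpace ℝ (Fin p))) 1, g (u:(EuclideanSpace ℝ (Fin p))) * ⟪(u:(EuclideanSpace ℝ (Fin p))), b⟫ ∂ν := by
      rw [hgradinner h]
      have hbinner : ∀ u : sphere (0:(EuclideanSpace ℝ (Fin p))) 1, g (u:(EuclideanSpace ℝ (Fin p))) * ⟪(u:(EuclideanSpace ℝ (Fin p))), b⟫ = δ⁻¹ * (g (u:(EuclideanSpace ℝ (Fin p))) * ⟪(u:(EuclideanSpace ℝ (Fin p))), h⟫) := by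
        intro u
        rw [hb, real_inner_smul_right]; ring
      have : (∫ u : sphere (0:(EuclideanSpace ℝ (Fin p))) 1, g (u:(EuclideanSpace ℝ (Fin p))) * ⟪(u:(EuclideanSpace ℝ (Fin p))), b⟫ ∂ν)
          = δ⁻¹ * ∫ u : sphere (0:(EuclideanSpace ℝ (Fin p))) 1, g (u:(EuclideanSpace ℝ (Fin p))) * ⟪(u:(EuclideanSpace ℝ (Fin p))), h⟫ ∂ν := by
        rw [← integral_const_mul]
        exact integral_congr_ae (Filter.Eventually.of_forall hbinner)
      rw [this, ENNReal.toReal_inv, hνU]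
      have hp0 : (0:ℝ) < p := Nat.cast_pos.mpr hp
      field_simp
    rw [hfh1, hfh2, hginner]
    have hfactor : cR⁻¹ * (∫ w in closedBall b 1, g w) - cR⁻¹ * (∫ w in closedBall (0:(EuclideanSpace ℝ (Fin p))) 1, g w)
        - cR⁻¹ * (∫ u : sphere (0:(EuclideanSpace ℝ (Fin p))) 1, g (u:(EuclideanSpace ℝ (Fin p))) * ⟪(u:(EuclideanSpace ℝ (Fin p))), b⟫ ∂ν)
        = cR⁻¹ * ((∫ w in closedBall b 1, g w) - (∫ w in closedBall (0:(EuclideanSpace ℝ (Fin p))) 1, g w)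
          - ∫ u : sphere (0:(EuclideanSpace ℝ (Fin p))) 1, g (u:(EuclideanSpace ℝ (Fin p))) * ⟪(u:(EuclideanSpace ℝ (Fin p))), b⟫ ∂ν) := by ring
    rw [hfactor, abs_mul, abs_of_nonneg (by positivity : (0:ℝ) ≤ cR⁻¹)]
    calc cR⁻¹ * |(∫ w in closedBall b 1, g w) - (∫ w in closedBall (0:(EuclideanSpace ℝ (Fin p))) 1, g w)
          - ∫ u : sphere (0:(EuclideanSpace ℝ (Fin p))) 1, g (u:(EuclideanSpace ℝ (Fin p))) * ⟪(u:(EuclideanSpace ℝ (Fin p))), b⟫ ∂ν|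
        ≤ cR⁻¹ * (C * ‖b‖^2) := by
          refine mul_le_mul_of_nonneg_left (hkey b hbh) (by positivity)
      _ = (cR⁻¹ * C * (δ⁻¹)^2) * ‖h‖^2 := by rw [hbn]; ring
  -- conclude HasGradientAt
  show HasGradientAt fhat grad x
  rw [hasGradientAt_iff_hasFDerivAt, hasFDerivAt_iff_isLittleO_nhds_zero]
  have hbigO : (fun h : (EuclideanSpace ℝ (Fin p)) => fhat (x + h) - fhat x - (InnerProductSpace.toDual ℝ (EuclideanSpace ℝ (Fin p)) grad) h)
      =O[nhds 0] (fun h : (EuclideanSpace ℝ (Fin p)) => ‖h‖^2) := by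
    rw [Asymptotics.isBigO_iff]
    refine ⟨cR⁻¹ * C * (δ⁻¹)^2, ?_⟩
    have hev : ∀ᶠ h : (EuclideanSpace ℝ (Fin p)) in nhds 0, ‖h‖ ≤ δ/2 := by
      have : Metric.closedBall (0:(EuclideanSpace ℝ (Fin p))) (δ/2) ∈ nhds (0:(EuclideanSpace ℝ (Fin p))) :=
        Metric.closedBall_mem_nhds 0 (by positivity)
      refine Filter.eventually_of_mem this fun h hmem => ?_
      rwa [mem_closedBall_iff_norm, sub_zero] at hmem
    refine hev.mono fun h hh => ?_
    rw [Real.norm_eq_abs, Real.norm_eq_abs, abs_of_nonneg (by positivity : (0:ℝ) ≤ ‖h‖^2)]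
    have := hmain h hh
    rwa [show (InnerProductSpace.toDual ℝ (EuclideanSpace ℝ (Fin p)) grad) h = ⟪grad, h⟫ from
      InnerProductSpace.toDual_apply_apply]
  have hlittleo : (fun h : (EuclideanSpace ℝ (Fin p)) => ‖h‖^2) =o[nhds 0] (fun h : (EuclideanSpace ℝ (Fin p)) => h) := by
    rw [Asymptotics.isLittleO_iff]
    intro ε hε
    have : Metric.closedBall (0:(EuclideanSpace ℝ (Fin p))) ε ∈ nhds (0:(EuclideanSpace ℝ (Fin p))) := Metric.closedBall_mem_nhds 0 hε
    refine Filter.eventually_of_mem this fun h hmem => ?_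
    rw [mem_closedBall_iff_norm, sub_zero] at hmem
    rw [Real.norm_eq_abs, abs_of_nonneg (by positivity : (0:ℝ) ≤ ‖h‖^2), pow_two]
    exact mul_le_mul_of_nonneg_right hmem (norm_nonneg h)
  exact hbigO.trans_isLittleO hlittleo
end

section
/- Let f : ℝ^p → ℝ be differentiable with β-Lipschitz gradient, let δ > 0, and define f̂_δ(x) = ∫ f(x + δv) dμ(v), where μ is the uniform probability measure on the closed unit ball of ℝ^p. Then f̂_δ is differentiable with ∇f̂_δ(x) = ∫ ∇f(x + δv) dμ(v), and: (i) ∇f̂_δ is β-Lipschitz; (ii) if f is monotone with respect to the componentwise order on ℝ^p (x ≤ y implies f(x) ≤ f(y)), then so is f̂_δ; (iii) if ∇f is antitone with respect to the componentwise order on ℝ^p (x ≤ y implies ∇f(y) ≤ ∇f(x) componentwise), then so is ∇f̂_δ. -/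
open MeasureTheory InnerProductSpace

private lemma aux_prob (p : ℕ) :
    IsProbabilityMeasure
      (((volume (Metric.closedBall (0 : EuclideanSpace ℝ (Fin p)) 1))⁻¹ •
        volume.restrict (Metric.closedBall (0 : EuclideanSpace ℝ (Fin p)) 1) :
        Measure (EuclideanSpace ℝ (Fin p)))) := by
  constructor
  rw [Measure.smul_apply, Measure.restrict_apply MeasurableSet.univ, Set.univ_inter, smul_eq_mul,
    ENNReal.inv_mul_cancel
      (Metric.measure_closedBall_pos volume (0 : EuclideanSpace ℝ (Fin p)) one_pos).ne'
      (isCompact_closedBall _ _).measure_lt_top.ne]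

private lemma aux_integrable (p : ℕ) {H : Type*} [NormedAddCommGroup H] [NormedSpace ℝ H]
    (g : EuclideanSpace ℝ (Fin p) → H) (hg : Continuous g) :
    Integrable g ((volume (Metric.closedBall (0 : EuclideanSpace ℝ (Fin p)) 1))⁻¹ •
      volume.restrict (Metric.closedBall (0 : EuclideanSpace ℝ (Fin p)) 1)) := by
  have h1 : IntegrableOn g (Metric.closedBall (0 : EuclideanSpace ℝ (Fin p)) 1) volume :=
    hg.continuousOn.integrableOn_compact (isCompact_closedBall _ _)
  exact h1.smul_measure (ENNReal.inv_ne_top.2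
    (Metric.measure_closedBall_pos volume (0 : EuclideanSpace ℝ (Fin p)) one_pos).ne')

/-- Smoothing preserves β-smoothness, monotonicity and the DR property: for
differentiable `f` with β-Lipschitz gradient and `f̂_δ(x) = 𝔼_{v∼Unif(B)}[f(x+δv)]`,
the smoothed function has gradient `∇f̂_δ(x) = 𝔼_v[∇f(x+δv)]`, which is β-Lipschitz;
if `f` is monotone for the componentwise order then so is `f̂_δ`; and if `∇f` is
antitone for the componentwise order then so is `∇f̂_δ`. -/
theorem stmt_17 (p : ℕ) (f : EuclideanSpace ℝ (Fin p) → ℝ) (β : ℝ)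
    (hdiff : Differentiable ℝ f)
    (hsmooth : ∀ x y : EuclideanSpace ℝ (Fin p),
      ‖gradient f x - gradient f y‖ ≤ β * ‖x - y‖)
    (δ : ℝ) (hδ : 0 < δ)
    (μ : Measure (EuclideanSpace ℝ (Fin p)))
    (hμ : μ = (volume (Metric.closedBall (0 : EuclideanSpace ℝ (Fin p)) 1))⁻¹ •
      volume.restrict (Metric.closedBall (0 : EuclideanSpace ℝ (Fin p)) 1))
    (fhat : EuclideanSpace ℝ (Fin p) → ℝ)
    (hfhat : ∀ x, fhat x = ∫ v, f (x + δ • v) ∂μ) :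
    (∀ x, HasGradientAt fhat (∫ v, gradient f (x + δ • v) ∂μ) x) ∧
    (∀ x y : EuclideanSpace ℝ (Fin p),
      ‖gradient fhat x - gradient fhat y‖ ≤ β * ‖x - y‖) ∧
    ((∀ x y : EuclideanSpace ℝ (Fin p), (∀ i, x i ≤ y i) → f x ≤ f y) →
      ∀ x y : EuclideanSpace ℝ (Fin p), (∀ i, x i ≤ y i) → fhat x ≤ fhat y) ∧
    ((∀ x y : EuclideanSpace ℝ (Fin p), (∀ i, x i ≤ y i) →
        ∀ i, gradient f y i ≤ gradient f x i) →
      ∀ x y : EuclideanSpace ℝ (Fin p), (∀ i, x i ≤ y i) →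
        ∀ i, gradient fhat y i ≤ gradient fhat x i) := by
  have hprob : IsProbabilityMeasure μ := hμ ▸ aux_prob p
  have hgc : Continuous (gradient f) := by
    have h : LipschitzWith β.toNNReal (gradient f) := by
      apply LipschitzWith.of_dist_le_mul
      intro x y
      rw [dist_eq_norm, dist_eq_norm]
      exact (hsmooth x y).trans
        (mul_le_mul_of_nonneg_right (Real.le_coe_toNNReal β) (norm_nonneg _))
    exact h.continuous
  have hfc : Continuous f := hdiff.continuous
  have hshift : ∀ x : EuclideanSpace ℝ (Fin p), Continuous (fun v : EuclideanSpace ℝ (Fin p) =>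
      x + δ • v) := fun x => continuous_const.add (continuous_id.const_smul δ)
  have hint_f : ∀ x, Integrable (fun v => f (x + δ • v)) μ := fun x =>
    hμ ▸ aux_integrable p _ (hfc.comp (hshift x))
  have hint_g : ∀ x, Integrable (fun v => gradient f (x + δ • v)) μ := fun x =>
    hμ ▸ aux_integrable p _ (hgc.comp (hshift x))
  have hfd : ∀ z, fderiv ℝ f z = toDual ℝ (EuclideanSpace ℝ (Fin p)) (gradient f z) := fun z => by
    rw [gradient, (toDual ℝ (EuclideanSpace ℝ (Fin p))).apply_symm_apply]
  have hae : ∀ᵐ v ∂μ, ‖v‖ ≤ 1 := by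
    rw [hμ]
    refine Measure.ae_smul_measure ?_ _
    filter_upwards [ae_restrict_mem measurableSet_closedBall] with v hv
    simpa [mem_closedBall_zero_iff] using hv
  -- the main gradient computation
  have key : ∀ x, HasGradientAt fhat (∫ v, gradient f (x + δ • v) ∂μ) x := by
    intro x₀
    have hd : HasFDerivAt (fun x => ∫ v, f (x + δ • v) ∂μ)
        (∫ v, (toDual ℝ (EuclideanSpace ℝ (Fin p))) (gradient f (x₀ + δ • v)) ∂μ) x₀ := by
      apply hasFDerivAt_integral_of_dominated_of_fderiv_le
        (F' := fun x v => (toDual ℝ (EuclideanSpace ℝ (Fin p))) (gradient f (x + δ • v)))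
        (bound := fun _ => ‖gradient f x₀‖ + |β| * (1 + δ)) (s := Metric.ball x₀ 1) (Metric.ball_mem_nhds x₀ one_pos)
      · exact Filter.Eventually.of_forall fun x =>
          ((hfc.comp (hshift x)).aestronglyMeasurable)
      · exact hint_f x₀
      · exact ((toDual ℝ (EuclideanSpace ℝ (Fin p))).continuous.comp
          (hgc.comp (hshift x₀))).aestronglyMeasurable
      · filter_upwards [hae] with v hv
        intro x hx
        rw [LinearIsometryEquiv.norm_map]
        calc ‖gradient f (x + δ • v)‖
            ≤ ‖gradient f x₀‖ + ‖gradient f (x + δ • v) - gradient f x₀‖ := by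
              simpa using norm_add_le (gradient f x₀) (gradient f (x + δ • v) - gradient f x₀)
          _ ≤ ‖gradient f x₀‖ + β * ‖x + δ • v - x₀‖ := by
              exact add_le_add_right (hsmooth _ _) _
          _ ≤ ‖gradient f x₀‖ + |β| * (1 + δ) := by
              apply add_le_add_right
              calc β * ‖x + δ • v - x₀‖ ≤ |β| * ‖x + δ • v - x₀‖ := by
                    exact mul_le_mul_of_nonneg_right (le_abs_self β) (norm_nonneg _)
                _ ≤ |β| * (1 + δ) := by
                    gcongr
                    calc ‖x + δ • v - x₀‖ = ‖(x - x₀) + δ • v‖ := by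
                          rw [show x + δ • v - x₀ = (x - x₀) + δ • v by abel]
                      _ ≤ ‖x - x₀‖ + ‖δ • v‖ := norm_add_le _ _
                      _ ≤ 1 + δ := by
                          gcongr
                          · exact le_of_lt (by simpa [dist_eq_norm] using hx)
                          · rw [norm_smul, Real.norm_eq_abs, abs_of_pos hδ]
                            nlinarith [hδ.le]
      · exact integrable_const _
      · filter_upwards [] with v
        intro x _
        have h1 := (hdiff (x + δ • v)).hasFDerivAt
        have h2 : HasFDerivAt (fun y : EuclideanSpace ℝ (Fin p) => y + δ • v)
            (ContinuousLinearMap.id ℝ (EuclideanSpace ℝ (Fin p))) x :=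
          (hasFDerivAt_id x).add_const _
        have h3 := h1.comp x h2
        rw [ContinuousLinearMap.comp_id, hfd] at h3
        exact h3
    rw [show (fun v => (toDual ℝ (EuclideanSpace ℝ (Fin p))) (gradient f (x₀ + δ • v)))
          = (fun v => (toDual ℝ (EuclideanSpace ℝ (Fin p))).toLinearIsometry
              (gradient f (x₀ + δ • v))) from rfl,
        (toDual ℝ (EuclideanSpace ℝ (Fin p))).toLinearIsometry.integral_comp_comm] at hd
    have heq : fhat = fun x => ∫ v, f (x + δ • v) ∂μ := funext hfhat
    rw [heq]
    exact hd
  refine ⟨key, ?_, ?_, ?_⟩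
  · -- β-smoothness of fhat
    intro x y
    rw [(key x).gradient, (key y).gradient, ← integral_sub (hint_g x) (hint_g y)]
    calc ‖∫ v, (gradient f (x + δ • v) - gradient f (y + δ • v)) ∂μ‖
        ≤ ∫ v, ‖gradient f (x + δ • v) - gradient f (y + δ • v)‖ ∂μ :=
          norm_integral_le_integral_norm _
      _ ≤ ∫ _v, β * ‖x - y‖ ∂μ := by
          apply integral_mono ((hint_g x).sub (hint_g y)).norm (integrable_const _)
          intro v
          have := hsmooth (x + δ • v) (y + δ • v)
          simpa using this
      _ = β * ‖x - y‖ := by simp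
  · -- monotonicity
    intro hmono x y hxy
    rw [hfhat x, hfhat y]
    apply integral_mono (hint_f x) (hint_f y)
    intro v
    apply hmono
    intro i
    simp only [PiLp.add_apply, PiLp.smul_apply, smul_eq_mul]
    exact add_le_add_left (hxy i) _
  · -- DR property
    intro hDR x y hxy i
    have hcoord : ∀ z : EuclideanSpace ℝ (Fin p),
        gradient fhat z i = ∫ v, gradient f (z + δ • v) i ∂μ := by
      intro z
      rw [(key z).gradient]
      exact ((EuclideanSpace.proj i).integral_comp_comm (hint_g z)).symm
    rw [hcoord x, hcoord y]
    have hint_c : ∀ z : EuclideanSpace ℝ (Fin p),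
        Integrable (fun v => gradient f (z + δ • v) i) μ := fun z =>
      hμ ▸ aux_integrable p _ ((EuclideanSpace.proj (𝕜 := ℝ) i).continuous.comp (hgc.comp (hshift z)))
    apply integral_mono (hint_c y) (hint_c x)
    intro v
    apply hDR
    intro j
    simp only [PiLp.add_apply, PiLp.smul_apply, smul_eq_mul]
    exact add_le_add_left (hxy j) _
end

section
/- Let p ≥ 1, let K ⊆ ℝ^p be a convex compact set, let r > 0 be such that the closed Euclidean ball of radius r centered at the origin is contained in K, let δ > 0, and suppose α := (√p + 1)δ/r < 1. Define K' = {(1−α)x + δ·𝟙 : x ∈ K}, where 𝟙 = (1,…,1) ∈ ℝ^p. Then K' is convex and compact, K' ⊆ K, and for every y ∈ K' the closed Euclidean ball of radius δ centered at y is contained in K (i.e. K' is a δ-interior of K). -/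
/-- Construction of a δ-interior: if `K ⊆ ℝ^p` is convex and compact, contains the
closed ball of radius `r > 0` around the origin, `δ > 0` and
`α = (√p + 1)δ/r < 1`, then `K' = (1−α)K + δ𝟙` is convex, compact, contained in `K`,
and every closed ball of radius `δ` centered at a point of `K'` is contained in `K`. -/
theorem stmt_18 (p : ℕ) (hp : 1 ≤ p)
    (Kset : Set (EuclideanSpace ℝ (Fin p)))
    (hconv : Convex ℝ Kset) (hcomp : IsCompact Kset)
    (r : ℝ) (hr : 0 < r)
    (hball : Metric.closedBall (0 : EuclideanSpace ℝ (Fin p)) r ⊆ Kset)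
    (δ : ℝ) (hδ : 0 < δ)
    (α : ℝ) (hα : α = (Real.sqrt p + 1) * δ / r) (hα1 : α < 1)
    (ones : EuclideanSpace ℝ (Fin p)) (hones : ∀ i, ones i = 1)
    (Kset' : Set (EuclideanSpace ℝ (Fin p)))
    (hK' : Kset' = (fun x => (1 - α) • x + δ • ones) '' Kset) :
    Convex ℝ Kset' ∧ IsCompact Kset' ∧ Kset' ⊆ Kset ∧
    ∀ y ∈ Kset', Metric.closedBall y δ ⊆ Kset := by
  have hsqrt : (0:ℝ) ≤ Real.sqrt p := Real.sqrt_nonneg _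
  have hαpos : 0 < α := by
    rw [hα]
    positivity
  have hones_norm : ‖ones‖ = Real.sqrt p := by
    rw [EuclideanSpace.norm_eq]
    congr 1
    simp [hones]
  -- main claim: every δ-ball around a point of Kset' is in Kset
  have hmain : ∀ y ∈ Kset', Metric.closedBall y δ ⊆ Kset := by
    intro y hy z hz
    rw [hK'] at hy
    obtain ⟨x, hx, rfl⟩ := hy
    set yy : EuclideanSpace ℝ (Fin p) := (1 - α) • x + δ • ones with hyy
    set w : EuclideanSpace ℝ (Fin p) := α⁻¹ • (δ • ones + (z - yy)) with hw
    have hwr : ‖w‖ ≤ r := by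
      have h1 : ‖δ • ones + (z - yy)‖ ≤ δ * Real.sqrt p + δ := by
        calc ‖δ • ones + (z - yy)‖ ≤ ‖δ • ones‖ + ‖z - yy‖ := norm_add_le _ _
        _ ≤ δ * Real.sqrt p + δ := by
            have : ‖z - yy‖ ≤ δ := by
              rw [← dist_eq_norm]
              exact Metric.mem_closedBall.mp hz
            have h2 : ‖δ • ones‖ = δ * Real.sqrt p := by
              rw [norm_smul, hones_norm, Real.norm_of_nonneg hδ.le]
            linarith
      have : ‖w‖ = α⁻¹ * ‖δ • ones + (z - yy)‖ := by
        rw [hw, norm_smul, Real.norm_of_nonneg (inv_nonneg.mpr hαpos.le)]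
      rw [this]
      have hrval : α * r = (Real.sqrt p + 1) * δ := by
        rw [hα]; field_simp
      rw [inv_mul_le_iff₀ hαpos]
      calc ‖δ • ones + (z - yy)‖ ≤ δ * Real.sqrt p + δ := h1
      _ = α * r := by rw [hrval]; ring
    have hwK : w ∈ Kset := hball (by simpa [Metric.mem_closedBall, dist_eq_norm] using hwr)
    have hz' : z = (1 - α) • x + α • w := by
      rw [hw, smul_smul, mul_inv_cancel₀ hαpos.ne', one_smul, hyy]
      abel
    rw [hz']
    exact hconv hx hwK (by linarith) hαpos.le (by ring)
  refine ⟨?_, ?_, ?_, hmain⟩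
  · rw [hK']
    intro y1 hy1 y2 hy2 a b ha hb hab
    obtain ⟨x1, hx1, rfl⟩ := hy1
    obtain ⟨x2, hx2, rfl⟩ := hy2
    refine ⟨a • x1 + b • x2, hconv hx1 hx2 ha hb hab, ?_⟩
    have hb' : b = 1 - a := by linarith
    subst hb'
    module
  · rw [hK']
    exact hcomp.image ((continuous_const_smul _).add continuous_const)
  · intro y hy
    exact hmain y hy (Metric.mem_closedBall_self hδ.le)
end
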